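/- arXiv:2507.17362 — 6 statements merged into one kernel-verified Lean document; each statement's English description precedes it below -/
import Mathlib

section
/- Necessary congruence for hyperbolic reducible triples: Let ((α₁,α₂),(β₁,β₂),(γ₁,γ₂)) ∈ 𝒯³ and suppose A, B, C ∈ U(2,1) are of elliptic types (α₁,α₂), (β₁,β₂), (γ₁,γ₂) respectively, satisfy A·B·C = λ·I₃ for some λ ∈ ℂ, and possess a common eigenvector v ∈ ℂ³∖{0} with vᴴ·J·v > 0. Then there exist (i,j,k) ∈ {1,2}³ and an integer m such that 2(α_i+β_j+γ_k) − (α_{3−i}+β_{3−j}+γ_{3−k}) = 2πm. -/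
open Real Matrix Set

noncomputable section

abbrev Pt : Type := ℝ × ℝ
abbrev Tri : Type := Pt × Pt × Pt

/-- Membership in `𝒯 = {(a₁,a₂) ∈ [0,2π)² : a₁ ≥ a₂}`. -/
def memT (p : Pt) : Prop :=
  0 ≤ p.1 ∧ p.1 < 2 * π ∧ 0 ≤ p.2 ∧ p.2 < 2 * π ∧ p.2 ≤ p.1

def memT3 (τ : Tri) : Prop := memT τ.1 ∧ memT τ.2.1 ∧ memT τ.2.2

/-- Membership in the interior `𝒯° = {(a₁,a₂) : 0 < a₂ < a₁ < 2π}`. -/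
def memTo (p : Pt) : Prop := 0 < p.2 ∧ p.2 < p.1 ∧ p.1 < 2 * π

def memTo3 (τ : Tri) : Prop := memTo τ.1 ∧ memTo τ.2.1 ∧ memTo τ.2.2

/-- The sum `S(τ) = α₁+α₂+β₁+β₂+γ₁+γ₂`. -/
def Sf (τ : Tri) : ℝ := τ.1.1 + τ.1.2 + τ.2.1.1 + τ.2.1.2 + τ.2.2.1 + τ.2.2.2

/-- The coordinate of a pair: index `0` is the first coordinate (subscript 1),
index `1` the second (subscript 2). -/
def coord (p : Pt) (i : Fin 2) : ℝ := if i = 0 then p.1 else p.2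

/-- `sg τ i j k = σ_{(i+1)(j+1)(k+1)}(τ) = α_i + β_j + γ_k` (indices in `Fin 2`,
index `0` ↔ subscript 1, index `1` ↔ subscript 2). -/
def sg (τ : Tri) (i j k : Fin 2) : ℝ := coord τ.1 i + coord τ.2.1 j + coord τ.2.2 k

/-- `Hf τ i j k = 2 σ_{ijk}(τ) − σ_{ī j̄ k̄}(τ)`, the complementary index being `i+1` in `Fin 2`. -/
def Hf (τ : Tri) (i j k : Fin 2) : ℝ := 2 * sg τ i j k - sg τ (i + 1) (j + 1) (k + 1)

abbrev M3 : Type := Matrix (Fin 3) (Fin 3) ℂ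

/-- The form J = diag(1, 1, −1). -/
def J3 : M3 := Matrix.diagonal ![1, 1, -1]

/-- Membership in U(2,1). -/
def memU21 (M : M3) : Prop := Mᴴ * J3 * M = J3

/-- The diagonal matrix E(a₁,a₂) = diag(e^{ia₁}, e^{ia₂}, 1). -/
def Emat (a₁ a₂ : ℝ) : M3 :=
  Matrix.diagonal ![Complex.exp (a₁ * Complex.I), Complex.exp (a₂ * Complex.I), 1]

/-- `M` is of elliptic type `(a₁,a₂)`: conjugate in U(2,1) to E(a₁,a₂). -/
def ellType (M : M3) (a₁ a₂ : ℝ) : Prop :=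
  ∃ P : M3, memU21 P ∧ M = P * Emat a₁ a₂ * P⁻¹


lemma detJ3 : J3.det = -1 := by
  simp [J3, Matrix.det_diagonal, Fin.prod_univ_three]

lemma isUnit_of_memU21 (P : M3) (hP : memU21 P) : IsUnit P := by
  rw [Matrix.isUnit_iff_isUnit_det]
  have h := congrArg Matrix.det hP
  rw [Matrix.det_mul, Matrix.det_mul, Matrix.det_conjTranspose, detJ3] at h
  have hne : P.det ≠ 0 := by
    intro h0
    rw [h0] at h
    simp at h
  exact isUnit_iff_ne_zero.mpr hne

lemma form_invariant (P : M3) (hP : memU21 P) (w : Fin 3 → ℂ) :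
    star (P.mulVec w) ⬝ᵥ J3.mulVec (P.mulVec w) = star w ⬝ᵥ J3.mulVec w := by
  rw [Matrix.star_mulVec, Matrix.mulVec_mulVec, Matrix.dotProduct_mulVec,
    Matrix.vecMul_vecMul, ← Matrix.mul_assoc, hP, ← Matrix.dotProduct_mulVec]

lemma det_ell (M : M3) (a₁ a₂ : ℝ) (h : ellType M a₁ a₂) :
    M.det = Complex.exp ((a₁ + a₂) * Complex.I) := by
  obtain ⟨P, hP, rfl⟩ := h
  rw [Matrix.det_conj (isUnit_of_memU21 P hP)]
  simp [Emat, Matrix.det_diagonal, Fin.prod_univ_three, ← Complex.exp_add, add_mul]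

lemma eig_ell (M : M3) (a₁ a₂ : ℝ) (h : ellType M a₁ a₂) (v : Fin 3 → ℂ) (c : ℂ)
    (hvc : M.mulVec v = c • v) (r : ℝ) (hr : 0 < r)
    (hvr : star v ⬝ᵥ J3.mulVec v = (r : ℂ)) :
    c = Complex.exp (a₁ * Complex.I) ∨ c = Complex.exp (a₂ * Complex.I) := by
  obtain ⟨P, hP, rfl⟩ := h
  have hu := isUnit_of_memU21 P hP
  have hPP : P * P⁻¹ = 1 := Matrix.mul_nonsing_inv P ((Matrix.isUnit_iff_isUnit_det P).mp hu)
  have hPP' : P⁻¹ * P = 1 := Matrix.nonsing_inv_mul P ((Matrix.isUnit_iff_isUnit_det P).mp hu)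
  set w := P⁻¹.mulVec v with hw
  have hvw : v = P.mulVec w := by
    rw [hw, Matrix.mulVec_mulVec, hPP, Matrix.one_mulVec]
  have hEw : (Emat a₁ a₂).mulVec w = c • w := by
    have h1 : (P * Emat a₁ a₂ * P⁻¹).mulVec v = c • v := hvc
    have h2 := congrArg (P⁻¹.mulVec ·) h1
    simpa [Matrix.mulVec_mulVec, ← Matrix.mul_assoc, hPP', Matrix.mulVec_smul, hw]
      using h2
  have hform : star w ⬝ᵥ J3.mulVec w = (r : ℂ) := by
    rw [← hvr, hvw, form_invariant P hP]
  by_contra hcon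
  push_neg at hcon
  obtain ⟨h1, h2⟩ := hcon
  have hw0 : w 0 = 0 := by
    have := congrFun hEw 0
    simp [Emat, Matrix.mulVec_diagonal] at this
    rcases this with h | h
    · exact absurd h h1.symm
    · exact h
  have hw1 : w 1 = 0 := by
    have := congrFun hEw 1
    simp [Emat, Matrix.mulVec_diagonal] at this
    rcases this with h | h
    · exact absurd h h2.symm
    · exact h
  have : star w ⬝ᵥ J3.mulVec w = -(Complex.normSq (w 2) : ℂ) := by
    simp [dotProduct, Fin.sum_univ_three, J3, Matrix.mulVec_diagonal, hw0, hw1,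
      Complex.mul_conj', Complex.normSq_eq_norm_sq]
    ring_nf
    rw [mul_comm]
    exact (Complex.mul_conj' (w 2)).symm ▸ rfl
  rw [hform] at this
  have hre := congrArg Complex.re this
  simp at hre
  nlinarith [Complex.normSq_nonneg (w 2)]

/-- Necessary congruence for hyperbolic reducible triples. -/
theorem hyperbolic_reducible_congruence (α₁ α₂ β₁ β₂ γ₁ γ₂ : ℝ)
    (hτ : memT3 ((α₁, α₂), (β₁, β₂), (γ₁, γ₂)))
    (A B C : M3) (hA : memU21 A) (hB : memU21 B) (hC : memU21 C)
    (hAe : ellType A α₁ α₂) (hBe : ellType B β₁ β₂) (hCe : ellType C γ₁ γ₂)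
    (lam : ℂ) (hABC : A * B * C = lam • (1 : M3))
    (v : Fin 3 → ℂ) (hv : v ≠ 0)
    (hvA : ∃ a : ℂ, A.mulVec v = a • v)
    (hvB : ∃ b : ℂ, B.mulVec v = b • v)
    (hvC : ∃ c : ℂ, C.mulVec v = c • v)
    (hvpos : ∃ r : ℝ, 0 < r ∧ star v ⬝ᵥ J3.mulVec v = (r : ℂ)) :
    ∃ i j k : Fin 2, ∃ m : ℤ,
      2 * sg ((α₁, α₂), (β₁, β₂), (γ₁, γ₂)) i j k
        - sg ((α₁, α₂), (β₁, β₂), (γ₁, γ₂)) (i + 1) (j + 1) (k + 1) = 2 * π * m := by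
  obtain ⟨r, hr, hvr⟩ := hvpos
  obtain ⟨a, ha⟩ := hvA
  obtain ⟨b, hb⟩ := hvB
  obtain ⟨c, hc⟩ := hvC
  -- pick indices
  have hA' := eig_ell A α₁ α₂ hAe v a ha r hr hvr
  have hB' := eig_ell B β₁ β₂ hBe v b hb r hr hvr
  have hC' := eig_ell C γ₁ γ₂ hCe v c hc r hr hvr
  set τ : (ℝ×ℝ)×(ℝ×ℝ)×(ℝ×ℝ) := ((α₁, α₂), (β₁, β₂), (γ₁, γ₂)) with hτdef
  have hi : ∃ i : Fin 2, a = Complex.exp ((coord (α₁,α₂) i) * Complex.I) := by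
    rcases hA' with h | h
    · exact ⟨0, by simpa [coord] using h⟩
    · exact ⟨1, by simpa [coord] using h⟩
  have hj : ∃ j : Fin 2, b = Complex.exp ((coord (β₁,β₂) j) * Complex.I) := by
    rcases hB' with h | h
    · exact ⟨0, by simpa [coord] using h⟩
    · exact ⟨1, by simpa [coord] using h⟩
  have hk : ∃ k : Fin 2, c = Complex.exp ((coord (γ₁,γ₂) k) * Complex.I) := by
    rcases hC' with h | h
    · exact ⟨0, by simpa [coord] using h⟩
    · exact ⟨1, by simpa [coord] using h⟩
  obtain ⟨i, hia⟩ := hi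
  obtain ⟨j, hjb⟩ := hj
  obtain ⟨k, hkc⟩ := hk
  refine ⟨i, j, k, ?_⟩
  -- lam = a*b*c
  have hlam : a * b * c = lam := by
    have h1 : (A * B * C).mulVec v = (a * b * c) • v := by
      rw [← Matrix.mulVec_mulVec, ← Matrix.mulVec_mulVec, hc, Matrix.mulVec_smul, hb,
        Matrix.mulVec_smul, Matrix.mulVec_smul, ha]
      rw [smul_smul, smul_smul]
      congr 1
      ring
    rw [hABC] at h1
    have h2 : (a * b * c) • v = lam • v := by
      rw [← h1]; simp [Matrix.smul_mulVec, Matrix.one_mulVec]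
    have h3 : (a * b * c - lam) • v = 0 := by
      rw [sub_smul, h2, sub_self]
    rcases smul_eq_zero.mp h3 with h | h
    · exact sub_eq_zero.mp h
    · exact absurd h hv
  -- determinant relation
  have hdet : lam ^ 3 = Complex.exp
      ((α₁ + α₂ + (β₁ + β₂) + (γ₁ + γ₂) : ℝ) * Complex.I) := by
    have h1 := congrArg Matrix.det hABC
    rw [Matrix.det_mul, Matrix.det_mul, det_ell A α₁ α₂ hAe, det_ell B β₁ β₂ hBe,
      det_ell C γ₁ γ₂ hCe, Matrix.det_smul, Matrix.det_one] at h1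
    rw [← Complex.exp_add, ← Complex.exp_add, ← add_mul, ← add_mul] at h1
    simpa [Fintype.card_fin] using h1.symm
  -- lam = exp(σ I)
  set σ : ℝ := sg τ i j k with hσ
  set S : ℝ := α₁ + α₂ + β₁ + β₂ + γ₁ + γ₂ with hS
  have hlamσ : lam = Complex.exp ((σ : ℝ) * Complex.I) := by
    rw [← hlam, hia, hjb, hkc, ← Complex.exp_add, ← Complex.exp_add]
    congr 1
    push_cast [hσ, sg]
    ring
  have hexp : Complex.exp (((3 * σ - S : ℝ)) * Complex.I) = 1 := by
    have h3 : lam ^ 3 = Complex.exp (((3 * σ : ℝ) : ℂ) * Complex.I) := by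
      rw [hlamσ, ← Complex.exp_nat_mul]
      congr 1
      push_cast
      ring
    have hmul : Complex.exp (((3 * σ - S : ℝ)) * Complex.I)
        * Complex.exp ((S : ℝ) * Complex.I)
        = 1 * Complex.exp ((S : ℝ) * Complex.I) := by
      rw [← Complex.exp_add, one_mul]
      rw [show ((3 * σ - S : ℝ) : ℂ) * Complex.I + ((S : ℝ) : ℂ) * Complex.I
          = ((3 * σ : ℝ) : ℂ) * Complex.I by push_cast; ring]
      rw [← h3, hdet]
      congr 1
      push_cast [hS]
      ring
    exact mul_right_cancel₀ (Complex.exp_ne_zero _) hmul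
  obtain ⟨n, hn⟩ := Complex.exp_eq_one_iff.mp hexp
  have hreal : 3 * σ - S = 2 * π * n := by
    have h2 : ((3 * σ - S : ℝ) : ℂ) * Complex.I = ((2 * π * n : ℝ) : ℂ) * Complex.I := by
      rw [hn]; push_cast; ring
    have h3 := mul_right_cancel₀ Complex.I_ne_zero h2
    exact_mod_cast h3
  have hcomp : sg τ i j k + sg τ (i+1) (j+1) (k+1) = S := by
    have hc2 : ∀ (p : ℝ × ℝ) (l : Fin 2), coord p l + coord p (l+1) = p.1 + p.2 := by
      intro p l
      fin_cases l <;> simp [coord] <;> ring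
    simp only [sg, hS, hτdef]
    have := hc2 (α₁, α₂) i
    have := hc2 (β₁, β₂) j
    have := hc2 (γ₁, γ₂) k
    simp at *
    linarith
  refine ⟨n, ?_⟩
  have : sg τ (i+1) (j+1) (k+1) = S - σ := by rw [← hcomp]; ring
  rw [this]
  push_cast
  linarith
end
end

section
/- Interior reducible walls: (i) For each (i,j,k) ∈ {(2,1,1),(1,2,1),(1,1,2)}: {τ ∈ (𝒯°)³ : H_{ijk}(τ) = 2π and σ_{ī j̄ k̄}(τ) < 2π} ⊆ P₄π. (ii) {τ ∈ 𝒯³ : S(τ) = 6π and σ₂₂₂(τ) < 2π} ⊆ P₆π. (iii) For each (i,j,k) ∈ {(2,2,1),(2,1,2),(1,2,2)}: {τ ∈ (𝒯°)³ : H_{ijk}(τ) = 0 and σ_{ī j̄ k̄}(τ) > 4π} ⊆ P₆π ∩ {S > 6π}. (iv) For each (i,j,k) ∈ {(1,1,2),(1,2,1),(2,1,1)}: {τ ∈ (𝒯°)³ : H_{ijk}(τ) = 6π and σ_{ī j̄ k̄}(τ) < 2π} ⊆ P₆π ∩ {S < 6π}. (v) For each (i,j,k) ∈ {(1,2,2),(2,1,2),(2,2,1)}: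 {τ ∈ (𝒯°)³ : H_{ijk}(τ) = 4π and σ_{ī j̄ k̄}(τ) > 4π} ⊆ P₈π. -/
open Real Matrix Set

noncomputable section

/-- The polytope P₄π. -/
def P4 : Set Tri := {τ | memT3 τ ∧ (Hf τ 1 1 1 < -(4 * π) ∨
  (Sf τ < 4 * π ∧ Hf τ 0 1 1 < 2 * π ∧ Hf τ 1 0 1 < 2 * π ∧ Hf τ 1 1 0 < 2 * π ∧
    2 * π < Hf τ 0 0 0))}

/-- The polytope P₆π. -/
def P6 : Set Tri := {τ | memT3 τ ∧ Hf τ 1 1 1 < 0 ∧ 6 * π < Hf τ 0 0 0}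

/-- The polytope P₈π. -/
def P8 : Set Tri := {τ | memT3 τ ∧ (10 * π < Hf τ 0 0 0 ∨
  (8 * π < Sf τ ∧ 4 * π < Hf τ 1 0 0 ∧ 4 * π < Hf τ 0 1 0 ∧ 4 * π < Hf τ 0 0 1 ∧
    Hf τ 1 1 1 < 4 * π))}

/-- Interior reducible walls.
Indices in `Fin 2`: index `0` ↔ subscript 1, index `1` ↔ subscript 2, so e.g.
the index triple (2,1,1) of the paper is `(1,0,0)` here. -/
theorem interior_reducible_walls :
    -- (i)
    (∀ i j k : Fin 2,
      ((i, j, k) = ((1 : Fin 2), (0 : Fin 2), (0 : Fin 2)) ∨ (i, j, k) = (0, 1, 0) ∨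
        (i, j, k) = (0, 0, 1)) →
      {τ : Tri | memTo3 τ ∧ Hf τ i j k = 2 * π ∧ sg τ (i + 1) (j + 1) (k + 1) < 2 * π} ⊆ P4) ∧
    -- (ii)
    ({τ : Tri | memT3 τ ∧ Sf τ = 6 * π ∧ sg τ 1 1 1 < 2 * π} ⊆ P6) ∧
    -- (iii)
    (∀ i j k : Fin 2,
      ((i, j, k) = ((1 : Fin 2), (1 : Fin 2), (0 : Fin 2)) ∨ (i, j, k) = (1, 0, 1) ∨
        (i, j, k) = (0, 1, 1)) →
      {τ : Tri | memTo3 τ ∧ Hf τ i j k = 0 ∧ 4 * π < sg τ (i + 1) (j + 1) (k + 1)} ⊆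
        P6 ∩ {τ : Tri | 6 * π < Sf τ}) ∧
    -- (iv)
    (∀ i j k : Fin 2,
      ((i, j, k) = ((0 : Fin 2), (0 : Fin 2), (1 : Fin 2)) ∨ (i, j, k) = (0, 1, 0) ∨
        (i, j, k) = (1, 0, 0)) →
      {τ : Tri | memTo3 τ ∧ Hf τ i j k = 6 * π ∧ sg τ (i + 1) (j + 1) (k + 1) < 2 * π} ⊆
        P6 ∩ {τ : Tri | Sf τ < 6 * π}) ∧
    -- (v)
    (∀ i j k : Fin 2,
      ((i, j, k) = ((0 : Fin 2), (1 : Fin 2), (1 : Fin 2)) ∨ (i, j, k) = (1, 0, 1) ∨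
        (i, j, k) = (1, 1, 0)) →
      {τ : Tri | memTo3 τ ∧ Hf τ i j k = 4 * π ∧ 4 * π < sg τ (i + 1) (j + 1) (k + 1)} ⊆ P8) := by

  constructor
  · -- (i)
    rintro i j k (h|h|h) <;>
    · simp only [Prod.mk.injEq] at h
      obtain ⟨rfl, rfl, rfl⟩ := h
      rintro ⟨⟨a1,a2⟩,⟨b1,b2⟩,⟨c1,c2⟩⟩ ⟨⟨⟨h1,h2,h3⟩,⟨h4,h5,h6⟩,⟨h7,h8,h9⟩⟩, hH, hs⟩
      simp only [Hf, sg, coord, Sf, P4, memT3, memT, memTo3, memTo, Set.mem_setOf_eq,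
        Fin.isValue, if_true, if_false, one_ne_zero, reduceIte] at *
      simp only [Fin.isValue, Fin.reduceAdd, Fin.reduceEq, reduceIte] at hH hs ⊢
      refine ⟨⟨⟨?_,?_,?_,?_,?_⟩,⟨?_,?_,?_,?_,?_⟩,⟨?_,?_,?_,?_,?_⟩⟩,
        Or.inr ⟨?_,?_,?_,?_,?_⟩⟩ <;> linarith
  constructor
  · -- (ii)
    rintro ⟨⟨a1,a2⟩,⟨b1,b2⟩,⟨c1,c2⟩⟩ ⟨hm, hS, hs⟩
    simp only [Hf, sg, coord, Sf, P6, Set.mem_setOf_eq, Fin.isValue] at *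
    simp only [Fin.isValue, Fin.reduceAdd, Fin.reduceEq, reduceIte] at hS hs ⊢
    exact ⟨hm, by linarith, by linarith⟩
  constructor
  · -- (iii)
    rintro i j k (h|h|h) <;>
    · simp only [Prod.mk.injEq] at h
      obtain ⟨rfl, rfl, rfl⟩ := h
      rintro ⟨⟨a1,a2⟩,⟨b1,b2⟩,⟨c1,c2⟩⟩ ⟨⟨⟨h1,h2,h3⟩,⟨h4,h5,h6⟩,⟨h7,h8,h9⟩⟩, hH, hs⟩
      simp only [Hf, sg, coord, Sf, P6, memT3, memT, memTo3, memTo, Set.mem_setOf_eq,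
        Set.mem_inter_iff, Fin.isValue] at *
      simp only [Fin.isValue, Fin.reduceAdd, Fin.reduceEq, reduceIte] at hH hs ⊢
      refine ⟨⟨⟨⟨?_,?_,?_,?_,?_⟩,⟨?_,?_,?_,?_,?_⟩,⟨?_,?_,?_,?_,?_⟩⟩,?_,?_⟩,?_⟩ <;> linarith
  constructor
  · -- (iv)
    rintro i j k (h|h|h) <;>
    · simp only [Prod.mk.injEq] at h
      obtain ⟨rfl, rfl, rfl⟩ := h
      rintro ⟨⟨a1,a2⟩,⟨b1,b2⟩,⟨c1,c2⟩⟩ ⟨⟨⟨h1,h2,h3⟩,⟨h4,h5,h6⟩,⟨h7,h8,h9⟩⟩, hH, hs⟩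
      simp only [Hf, sg, coord, Sf, P6, memT3, memT, memTo3, memTo, Set.mem_setOf_eq,
        Set.mem_inter_iff, Fin.isValue] at *
      simp only [Fin.isValue, Fin.reduceAdd, Fin.reduceEq, reduceIte] at hH hs ⊢
      refine ⟨⟨⟨⟨?_,?_,?_,?_,?_⟩,⟨?_,?_,?_,?_,?_⟩,⟨?_,?_,?_,?_,?_⟩⟩,?_,?_⟩,?_⟩ <;> linarith
  · -- (v)
    rintro i j k (h|h|h) <;>
    · simp only [Prod.mk.injEq] at h
      obtain ⟨rfl, rfl, rfl⟩ := h
      rintro ⟨⟨a1,a2⟩,⟨b1,b2⟩,⟨c1,c2⟩⟩ ⟨⟨⟨h1,h2,h3⟩,⟨h4,h5,h6⟩,⟨h7,h8,h9⟩⟩, hH, hs⟩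
      simp only [Hf, sg, coord, Sf, P8, memT3, memT, memTo3, memTo, Set.mem_setOf_eq,
        Fin.isValue] at *
      simp only [Fin.isValue, Fin.reduceAdd, Fin.reduceEq, reduceIte] at hH hs ⊢
      refine ⟨⟨⟨?_,?_,?_,?_,?_⟩,⟨?_,?_,?_,?_,?_⟩,⟨?_,?_,?_,?_,?_⟩⟩,
        Or.inr ⟨?_,?_,?_,?_,?_⟩⟩ <;> linarith
end
end

section
/- Intersections of interior reducible walls: (i) For any two distinct p = (i,j,k) and q = (i',j',k') in {(2,1,1),(1,2,1),(1,1,2)}, the set {τ ∈ (𝒯°)³ : H_p(τ) = 2π, σ_{p̄}(τ) < 2π, H_q(τ) = 2π, σ_{q̄}(τ) < 2π} is nonempty (here p̄ = (3−i,3−j,3−k)). (ii) For any two distinct p, q in {(2,2,1),(2,1,2),(1,2,2)}, the set {τ ∈ 𝒯³ : H_p(τ) = 0, σ_{p̄}(τ) > 4π, H_q(τ) = 0, σ_{q̄}(τ) > 4π} is empty. (iii) For any two distinct p, q in {(1,1,2),(1,2,1),(2,1,1)}, the set {τ ∈ 𝒯³ : H_p(τ) = 6π, σ_{p̄}(τ)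 < 2π, H_q(τ) = 6π, σ_{q̄}(τ) < 2π} is empty. (iv) For any two distinct p, q in {(1,2,2),(2,1,2),(2,2,1)}, the set {τ ∈ (𝒯°)³ : H_p(τ) = 4π, σ_{p̄}(τ) > 4π, H_q(τ) = 4π, σ_{q̄}(τ) > 4π} is nonempty. -/
open Real Matrix Set

noncomputable section

set_option maxHeartbeats 1600000 in
/-- Intersections of interior reducible walls.
Indices in `Fin 2`: index `0` ↔ subscript 1, index `1` ↔ subscript 2, so e.g.
the index triple (2,1,1) of the paper is `(1,0,0)` here. -/
theorem interior_wall_intersections :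
    -- (i) pairwise nonempty intersections inside (𝒯°)³
    (∀ p q : Fin 2 × Fin 2 × Fin 2,
      (p = ((1 : Fin 2), (0 : Fin 2), (0 : Fin 2)) ∨ p = (0, 1, 0) ∨ p = (0, 0, 1)) →
      (q = ((1 : Fin 2), (0 : Fin 2), (0 : Fin 2)) ∨ q = (0, 1, 0) ∨ q = (0, 0, 1)) →
      p ≠ q →
      {τ : Tri | memTo3 τ ∧
        Hf τ p.1 p.2.1 p.2.2 = 2 * π ∧ sg τ (p.1 + 1) (p.2.1 + 1) (p.2.2 + 1) < 2 * π ∧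
        Hf τ q.1 q.2.1 q.2.2 = 2 * π ∧ sg τ (q.1 + 1) (q.2.1 + 1) (q.2.2 + 1) < 2 * π}.Nonempty) ∧
    -- (ii) empty intersections
    (∀ p q : Fin 2 × Fin 2 × Fin 2,
      (p = ((1 : Fin 2), (1 : Fin 2), (0 : Fin 2)) ∨ p = (1, 0, 1) ∨ p = (0, 1, 1)) →
      (q = ((1 : Fin 2), (1 : Fin 2), (0 : Fin 2)) ∨ q = (1, 0, 1) ∨ q = (0, 1, 1)) →
      p ≠ q →
      {τ : Tri | memT3 τ ∧
        Hf τ p.1 p.2.1 p.2.2 = 0 ∧ 4 * π < sg τ (p.1 + 1) (p.2.1 + 1) (p.2.2 + 1) ∧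
        Hf τ q.1 q.2.1 q.2.2 = 0 ∧ 4 * π < sg τ (q.1 + 1) (q.2.1 + 1) (q.2.2 + 1)} = ∅) ∧
    -- (iii) empty intersections
    (∀ p q : Fin 2 × Fin 2 × Fin 2,
      (p = ((0 : Fin 2), (0 : Fin 2), (1 : Fin 2)) ∨ p = (0, 1, 0) ∨ p = (1, 0, 0)) →
      (q = ((0 : Fin 2), (0 : Fin 2), (1 : Fin 2)) ∨ q = (0, 1, 0) ∨ q = (1, 0, 0)) →
      p ≠ q →
      {τ : Tri | memT3 τ ∧
        Hf τ p.1 p.2.1 p.2.2 = 6 * π ∧ sg τ (p.1 + 1) (p.2.1 + 1) (p.2.2 + 1) < 2 * π ∧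
        Hf τ q.1 q.2.1 q.2.2 = 6 * π ∧ sg τ (q.1 + 1) (q.2.1 + 1) (q.2.2 + 1) < 2 * π} = ∅) ∧
    -- (iv) pairwise nonempty intersections inside (𝒯°)³
    (∀ p q : Fin 2 × Fin 2 × Fin 2,
      (p = ((0 : Fin 2), (1 : Fin 2), (1 : Fin 2)) ∨ p = (1, 0, 1) ∨ p = (1, 1, 0)) →
      (q = ((0 : Fin 2), (1 : Fin 2), (1 : Fin 2)) ∨ q = (1, 0, 1) ∨ q = (1, 1, 0)) →
      p ≠ q →
      {τ : Tri | memTo3 τ ∧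
        Hf τ p.1 p.2.1 p.2.2 = 4 * π ∧ 4 * π < sg τ (p.1 + 1) (p.2.1 + 1) (p.2.2 + 1) ∧
        Hf τ q.1 q.2.1 q.2.2 = 4 * π ∧ 4 * π < sg τ (q.1 + 1) (q.2.1 + 1) (q.2.2 + 1)}.Nonempty) := by
  have hπ := Real.pi_pos
  refine ⟨?_, ?_, ?_, ?_⟩
  · -- (i) nonempty
    intro p q hp hq hne
    refine ⟨((2*π/3, π/3), (2*π/3, π/3), (2*π/3, π/3)), ?_⟩
    rcases hp with rfl | rfl | rfl <;> rcases hq with rfl | rfl | rfl <;>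
      simp only [Set.mem_setOf_eq, memTo3, memTo, Hf, sg, coord, Fin.isValue,
        Fin.reduceAdd, Fin.reduceEq, reduceIte, one_ne_zero] <;>
      refine ⟨⟨⟨?_, ?_, ?_⟩, ⟨?_, ?_, ?_⟩, ⟨?_, ?_, ?_⟩⟩, ?_, ?_, ?_, ?_⟩ <;> linarith
  · -- (ii) empty
    intro p q hp hq hne
    rcases hp with rfl | rfl | rfl <;> rcases hq with rfl | rfl | rfl <;>
      first
      | exact absurd rfl hne
      | · ext ⟨⟨a1, a2⟩, ⟨b1, b2⟩, ⟨c1, c2⟩⟩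
          simp only [Set.mem_setOf_eq, Set.mem_empty_iff_false, iff_false,
            memT3, memT, Hf, sg, coord, Fin.isValue,
            Fin.reduceAdd, Fin.reduceEq, reduceIte, one_ne_zero]
          rintro ⟨⟨⟨_, _, _, _, _⟩, ⟨_, _, _, _, _⟩, ⟨_, _, _, _, _⟩⟩, h1, h2, h3, h4⟩
          linarith
  · -- (iii) empty
    intro p q hp hq hne
    rcases hp with rfl | rfl | rfl <;> rcases hq with rfl | rfl | rfl <;>
      first
      | exact absurd rfl hne
      | · ext ⟨⟨a1, a2⟩, ⟨b1, b2⟩, ⟨c1, c2⟩⟩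
          simp only [Set.mem_setOf_eq, Set.mem_empty_iff_false, iff_false,
            memT3, memT, Hf, sg, coord, Fin.isValue,
            Fin.reduceAdd, Fin.reduceEq, reduceIte, one_ne_zero]
          rintro ⟨⟨⟨_, _, _, _, _⟩, ⟨_, _, _, _, _⟩, ⟨_, _, _, _, _⟩⟩, h1, h2, h3, h4⟩
          linarith
  · -- (iv) nonempty
    intro p q hp hq hne
    refine ⟨((5*π/3, 4*π/3), (5*π/3, 4*π/3), (5*π/3, 4*π/3)), ?_⟩
    rcases hp with rfl | rfl | rfl <;> rcases hq with rfl | rfl | rfl <;>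
      simp only [Set.mem_setOf_eq, memTo3, memTo, Hf, sg, coord, Fin.isValue,
        Fin.reduceAdd, Fin.reduceEq, reduceIte, one_ne_zero] <;>
      refine ⟨⟨⟨?_, ?_, ?_⟩, ⟨?_, ?_, ?_⟩, ⟨?_, ?_, ?_⟩⟩, ?_, ?_, ?_, ?_⟩ <;> linarith
end
end

section
/- Connected components of the polytopes: Let C₁ = {τ ∈ 𝒯³ : H₂₂₂(τ) < −4π} and C₂ = {τ ∈ 𝒯³ : S(τ) < 4π, H₁₂₂(τ) < 2π, H₂₁₂(τ) < 2π, H₂₂₁(τ) < 2π, H₁₁₁(τ) > 2π}; let C₁' = {τ ∈ 𝒯³ : H₁₁₁(τ) > 10π} and C₂' = {τ ∈ 𝒯³ : S(τ) > 8π, H₂₁₁(τ) > 4π, H₁₂₁(τ) > 4π, H₁₁₂(τ) > 4π, H₂₂₂(τ) < 4π}. Then P₄π = C₁ ∪ C₂ with C₁ ∩ C₂ = ∅, C₁ and C₂ nonempty and connected; P₈π = C₁' ∪ C₂' with C₁' ∩ C₂' = ∅, C₁' and C₂' nonempty and connected; and P₆π is nonempty and connected. -/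
open Real Matrix Set

noncomputable section

/-- First connected component of P₄π: `{H₂₂₂ < −4π}` (in 𝒯³). -/
def Comp1 : Set Tri := {τ | memT3 τ ∧ Hf τ 1 1 1 < -(4 * π)}

/-- Second connected component of P₄π. -/
def Comp2 : Set Tri := {τ | memT3 τ ∧ Sf τ < 4 * π ∧ Hf τ 0 1 1 < 2 * π ∧
  Hf τ 1 0 1 < 2 * π ∧ Hf τ 1 1 0 < 2 * π ∧ 2 * π < Hf τ 0 0 0}

/-- First connected component of P₈π: `{H₁₁₁ > 10π}` (in 𝒯³). -/
def Comp1' : Set Tri := {τ | memT3 τ ∧ 10 * π < Hf τ 0 0 0}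

/-- Second connected component of P₈π. -/
def Comp2' : Set Tri := {τ | memT3 τ ∧ 8 * π < Sf τ ∧ 4 * π < Hf τ 1 0 0 ∧
  4 * π < Hf τ 0 1 0 ∧ 4 * π < Hf τ 0 0 1 ∧ Hf τ 1 1 1 < 4 * π}

/- ### Auxiliary lemmas -/

lemma coord_combo (a b : ℝ) (x y : Pt) (i : Fin 2) :
    coord (a • x + b • y) i = a * coord x i + b * coord y i := by
  unfold coord; split <;> simp [Prod.smul_fst, Prod.smul_snd, Prod.fst_add, Prod.snd_add]

lemma sg_combo (a b : ℝ) (x y : Tri) (i j k : Fin 2) :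
    sg (a • x + b • y) i j k = a * sg x i j k + b * sg y i j k := by
  unfold sg
  show coord (a • x.1 + b • y.1) i + coord (a • x.2.1 + b • y.2.1) j
      + coord (a • x.2.2 + b • y.2.2) k = _
  rw [coord_combo, coord_combo, coord_combo]; ring

lemma Hf_combo (a b : ℝ) (x y : Tri) (i j k : Fin 2) :
    Hf (a • x + b • y) i j k = a * Hf x i j k + b * Hf y i j k := by
  unfold Hf; rw [sg_combo, sg_combo]; ring

lemma Sf_combo (a b : ℝ) (x y : Tri) :
    Sf (a • x + b • y) = a * Sf x + b * Sf y := by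
  unfold Sf
  show (a • x.1 + b • y.1).1 + (a • x.1 + b • y.1).2 + (a • x.2.1 + b • y.2.1).1
      + (a • x.2.1 + b • y.2.1).2 + (a • x.2.2 + b • y.2.2).1 + (a • x.2.2 + b • y.2.2).2 = _
  simp only [Prod.smul_fst, Prod.smul_snd, Prod.fst_add, Prod.snd_add, smul_eq_mul]
  ring

lemma combo_lt {px py c a b : ℝ} (hx : px < c) (hy : py < c)
    (ha : 0 ≤ a) (hb : 0 ≤ b) (hab : a + b = 1) : a * px + b * py < c := by
  have hc : a * c + b * c = c := by rw [← add_mul, hab, one_mul]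
  rcases ha.eq_or_lt with h | h
  · have hb1 : b = 1 := by linarith
    rw [← h, hb1]; simpa using hy
  · have h1 := mul_lt_mul_of_pos_left hx h
    have h2 := mul_le_mul_of_nonneg_left hy.le hb
    linarith

lemma combo_gt {px py c a b : ℝ} (hx : c < px) (hy : c < py)
    (ha : 0 ≤ a) (hb : 0 ≤ b) (hab : a + b = 1) : c < a * px + b * py := by
  have := combo_lt (neg_lt_neg hx) (neg_lt_neg hy) ha hb hab
  linarith

lemma combo_ge {px py c a b : ℝ} (hx : c ≤ px) (hy : c ≤ py)
    (ha : 0 ≤ a) (hb : 0 ≤ b) (hab : a + b = 1) : c ≤ a * px + b * py := by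
  have hc : a * c + b * c = c := by rw [← add_mul, hab, one_mul]
  have h1 := mul_le_mul_of_nonneg_left hx ha
  have h2 := mul_le_mul_of_nonneg_left hy hb
  linarith

lemma convexT : Convex ℝ {p : Pt | memT p} := by
  intro x hx y hy a b ha hb hab
  obtain ⟨h1, h2, h3, h4, h5⟩ := hx
  obtain ⟨k1, k2, k3, k4, k5⟩ := hy
  have e1 : (a • x + b • y).1 = a * x.1 + b * y.1 := rfl
  have e2 : (a • x + b • y).2 = a * x.2 + b * y.2 := rfl
  refine ⟨?_, ?_, ?_, ?_, ?_⟩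
  · rw [e1]; exact combo_ge h1 k1 ha hb hab
  · rw [e1]; exact combo_lt h2 k2 ha hb hab
  · rw [e2]; exact combo_ge h3 k3 ha hb hab
  · rw [e2]; exact combo_lt h4 k4 ha hb hab
  · rw [e1, e2]
    have := mul_le_mul_of_nonneg_left h5 ha
    have := mul_le_mul_of_nonneg_left k5 hb
    linarith

lemma convexT3 : Convex ℝ {τ : Tri | memT3 τ} := by
  intro x hx y hy a b ha hb hab
  exact ⟨convexT hx.1 hy.1 ha hb hab, convexT hx.2.1 hy.2.1 ha hb hab,
    convexT hx.2.2 hy.2.2 ha hb hab⟩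

lemma convex_Hf_lt (i j k : Fin 2) (r : ℝ) : Convex ℝ {τ : Tri | Hf τ i j k < r} := by
  intro x hx y hy a b ha hb hab
  simp only [mem_setOf_eq] at *
  rw [Hf_combo]
  exact combo_lt hx hy ha hb hab

lemma convex_Hf_gt (i j k : Fin 2) (r : ℝ) : Convex ℝ {τ : Tri | r < Hf τ i j k} := by
  intro x hx y hy a b ha hb hab
  simp only [mem_setOf_eq] at *
  rw [Hf_combo]
  exact combo_gt hx hy ha hb hab

lemma convex_Sf_lt (r : ℝ) : Convex ℝ {τ : Tri | Sf τ < r} := by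
  intro x hx y hy a b ha hb hab
  simp only [mem_setOf_eq] at *
  rw [Sf_combo]
  exact combo_lt hx hy ha hb hab

lemma convex_Sf_gt (r : ℝ) : Convex ℝ {τ : Tri | r < Sf τ} := by
  intro x hx y hy a b ha hb hab
  simp only [mem_setOf_eq] at *
  rw [Sf_combo]
  exact combo_gt hx hy ha hb hab

lemma convexComp1 : Convex ℝ Comp1 :=
  convexT3.inter (convex_Hf_lt 1 1 1 (-(4 * π)))

lemma convexComp2 : Convex ℝ Comp2 :=
  convexT3.inter ((convex_Sf_lt (4 * π)).inter ((convex_Hf_lt 0 1 1 (2 * π)).inter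
    ((convex_Hf_lt 1 0 1 (2 * π)).inter ((convex_Hf_lt 1 1 0 (2 * π)).inter
      (convex_Hf_gt 0 0 0 (2 * π))))))

lemma convexComp1' : Convex ℝ Comp1' :=
  convexT3.inter (convex_Hf_gt 0 0 0 (10 * π))

lemma convexComp2' : Convex ℝ Comp2' :=
  convexT3.inter ((convex_Sf_gt (8 * π)).inter ((convex_Hf_gt 1 0 0 (4 * π)).inter
    ((convex_Hf_gt 0 1 0 (4 * π)).inter ((convex_Hf_gt 0 0 1 (4 * π)).inter
      (convex_Hf_lt 1 1 1 (4 * π))))))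

lemma convexP6 : Convex ℝ P6 :=
  convexT3.inter ((convex_Hf_lt 1 1 1 0).inter (convex_Hf_gt 0 0 0 (6 * π)))

lemma memT_of (u v : ℝ) (h1 : 0 ≤ v) (h2 : v ≤ u) (h3 : u < 2 * π) : memT (u, v) :=
  ⟨le_trans h1 h2, h3, h1, lt_of_le_of_lt h2 h3, h2⟩

lemma ne1 : Comp1.Nonempty := by
  have hπ := pi_pos
  refine ⟨((3 * π / 2, 0), (3 * π / 2, 0), (3 * π / 2, 0)), ⟨?_, ?_, ?_⟩, ?_⟩ <;>
    first
      | exact memT_of _ _ le_rfl (by linarith) (by linarith)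
      | (simp [Hf, sg, coord]; linarith)

lemma ne2 : Comp2.Nonempty := by
  have hπ := pi_pos
  refine ⟨((π / 2, 0), (π / 2, 0), (π / 2, 0)), ⟨?_, ?_, ?_⟩, ?_, ?_, ?_, ?_, ?_⟩ <;>
    first
      | exact memT_of _ _ le_rfl (by linarith) (by linarith)
      | (simp [Hf, sg, Sf, coord]; linarith)

lemma ne1' : Comp1'.Nonempty := by
  have hπ := pi_pos
  refine ⟨((11 * π / 6, 0), (11 * π / 6, 0), (11 * π / 6, 0)), ⟨?_, ?_, ?_⟩, ?_⟩ <;>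
    first
      | exact memT_of _ _ le_rfl (by linarith) (by linarith)
      | (simp [Hf, sg, coord]; linarith)

lemma ne2' : Comp2'.Nonempty := by
  have hπ := pi_pos
  refine ⟨((11 * π / 6, π), (11 * π / 6, π), (11 * π / 6, π)), ⟨?_, ?_, ?_⟩, ?_, ?_, ?_, ?_, ?_⟩ <;>
    first
      | exact memT_of _ _ (by linarith) (by linarith) (by linarith)
      | (simp [Hf, sg, Sf, coord]; linarith)

lemma neP6 : P6.Nonempty := by
  have hπ := pi_pos
  refine ⟨((3 * π / 2, 0), (3 * π / 2, 0), (3 * π / 2, 0)), ⟨?_, ?_, ?_⟩, ?_, ?_⟩ <;>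
    first
      | exact memT_of _ _ le_rfl (by linarith) (by linarith)
      | (simp [Hf, sg, coord]; linarith)

/-- Connected components of the polytopes P₄π, P₆π, P₈π. -/
theorem connected_components_of_polytopes :
    (P4 = Comp1 ∪ Comp2 ∧ Comp1 ∩ Comp2 = ∅ ∧ IsConnected Comp1 ∧ IsConnected Comp2) ∧
    (P8 = Comp1' ∪ Comp2' ∧ Comp1' ∩ Comp2' = ∅ ∧ IsConnected Comp1' ∧ IsConnected Comp2') ∧
    IsConnected P6 := by
  refine ⟨⟨?_, ?_, convexComp1.isConnected ne1, convexComp2.isConnected ne2⟩,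
    ⟨?_, ?_, convexComp1'.isConnected ne1', convexComp2'.isConnected ne2'⟩,
    convexP6.isConnected neP6⟩
  · ext τ
    simp only [P4, Comp1, Comp2, mem_setOf_eq, mem_union]
    tauto
  · rw [eq_empty_iff_forall_notMem]
    rintro τ ⟨⟨hT, h1⟩, ⟨-, h2, -, -, -, h3⟩⟩
    obtain ⟨⟨a1, -, a2, -, -⟩, ⟨b1, -, b2, -, -⟩, ⟨c1, -, c2, -, -⟩⟩ := hT
    simp [Hf, sg, Sf, coord] at h1 h2 h3
    linarith
  · ext τ
    simp only [P8, Comp1', Comp2', mem_setOf_eq, mem_union]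
    tauto
  · rw [eq_empty_iff_forall_notMem]
    rintro τ ⟨⟨hT, h1⟩, ⟨-, h2, -, -, -, -⟩⟩
    obtain ⟨⟨-, a1, -, a2, -⟩, ⟨-, b1, -, b2, -⟩, ⟨-, c1, -, c2, -⟩⟩ := hT
    simp [Hf, sg, Sf, coord] at h1 h2
    linarith
end
end

section
/- Cells of the complements: Define (all intersected with 𝒯³): C₄^{c,1} = {H₂₂₂ > −4π} ∩ ({S > 4π} ∪ {H₁₂₂ > 2π} ∪ {H₂₁₂ > 2π} ∪ {H₂₂₁ > 2π}), C₄^{c,2} = {H₁₁₁ < 2π}, C₆^c = {H₂₂₂ > 0} ∪ {H₁₁₁ < 6π}, C₈^{c,1} = {H₁₁₁ < 10π} ∩ ({S < 8π} ∪ {H₂₁₁ < 4π} ∪ {H₁₂₁ < 4π} ∪ {H₁₁₂ < 4π}), C₈^{c,2} = {H₂₂₂ > 4π}. Then: (1) C₄^{c,1}, C₄^{c,2}, C₆^c, C₈^{c,1}, C₈^{c,2} are all connected; moreover C₄^{c,1} is star-shaped with respect to p₀ = ((π,π),(π,π),(π,π)); (2) C₄^{c,1} ∩ C₄^{c,2}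 = ∅ and C₈^{c,1} ∩ C₈^{c,2} = ∅; (3) P₄π, C₄^{c,1}, C₄^{c,2} are pairwise disjoint and every τ ∈ 𝒯³ with H₂₂₂(τ) ≠ −4π, S(τ) ≠ 4π, H₁₂₂(τ) ≠ 2π, H₂₁₂(τ) ≠ 2π, H₂₂₁(τ) ≠ 2π and H₁₁₁(τ) ≠ 2π lies in P₄π ∪ C₄^{c,1} ∪ C₄^{c,2}; (4) P₈π, C₈^{c,1}, C₈^{c,2} are pairwise disjoint and every τ ∈ 𝒯³ with H₁₁₁(τ) ≠ 10π, S(τ) ≠ 8π, H₂₁₁(τ) ≠ 4π, H₁₂₁(τ) ≠ 4π, H₁₁₂(τ) ≠ 4π and H₂₂₂(τ) ≠ 4π lies in P₈π ∪ C₈^{c,1} ∪ C₈^{c,2}; (5) P₆π ∩ C₆^c = ∅ and every τ ∈ 𝒯³ with H₂₂₂(τ) ≠ 0 and H₁₁₁(τ) ≠ 6π lies in P₆π ∪ C₆^c. -/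
open Real Matrix Set

noncomputable section

/-- The cell C₄^{c,1}. -/
def C41 : Set Tri := {τ | memT3 τ ∧ -(4 * π) < Hf τ 1 1 1 ∧
  (4 * π < Sf τ ∨ 2 * π < Hf τ 0 1 1 ∨ 2 * π < Hf τ 1 0 1 ∨ 2 * π < Hf τ 1 1 0)}

/-- The cell C₄^{c,2}. -/
def C42 : Set Tri := {τ | memT3 τ ∧ Hf τ 0 0 0 < 2 * π}

/-- The cell C₆^c. -/
def C6c : Set Tri := {τ | memT3 τ ∧ (0 < Hf τ 1 1 1 ∨ Hf τ 0 0 0 < 6 * π)}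

/-- The cell C₈^{c,1}. -/
def C81 : Set Tri := {τ | memT3 τ ∧ Hf τ 0 0 0 < 10 * π ∧
  (Sf τ < 8 * π ∨ Hf τ 1 0 0 < 4 * π ∨ Hf τ 0 1 0 < 4 * π ∨ Hf τ 0 0 1 < 4 * π)}

/-- The cell C₈^{c,2}. -/
def C82 : Set Tri := {τ | memT3 τ ∧ 4 * π < Hf τ 1 1 1}


lemma combo_lt_s9 {a b u v w : ℝ} (ha : 0 ≤ a) (hb : 0 ≤ b) (hab : a + b = 1)
    (hu : u < w) (hv : v < w) : a * u + b * v < w := by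
  rcases ha.eq_or_lt with h | h
  · rw [← h] at hab ⊢; simp at hab ⊢; rw [hab]; simpa using hv
  · have h1 := mul_lt_mul_of_pos_left hu h
    have h2 := mul_le_mul_of_nonneg_left hv.le hb
    have h3 : a * w + b * w = w := by rw [← add_mul, hab, one_mul]
    linarith

lemma combo_gt_s9 {a b u v w : ℝ} (ha : 0 ≤ a) (hb : 0 ≤ b) (hab : a + b = 1)
    (hu : w < u) (hv : w < v) : w < a * u + b * v := by
  have := combo_lt_s9 ha hb hab (neg_lt_neg hu) (neg_lt_neg hv)
  linarith

lemma memT_comb {a b : ℝ} (ha : 0 ≤ a) (hb : 0 ≤ b) (hab : a + b = 1)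
    {p q : Pt} (hp : memT p) (hq : memT q) : memT (a • p + b • q) := by
  obtain ⟨hp1, hp2, hp3, hp4, hp5⟩ := hp
  obtain ⟨hq1, hq2, hq3, hq4, hq5⟩ := hq
  refine ⟨?_, ?_, ?_, ?_, ?_⟩ <;> simp [Prod.smul_def]
  · have := mul_nonneg ha hp1; have := mul_nonneg hb hq1; linarith
  · exact combo_lt_s9 ha hb hab hp2 hq2
  · have := mul_nonneg ha hp3; have := mul_nonneg hb hq3; linarith
  · exact combo_lt_s9 ha hb hab hp4 hq4
  · have := mul_le_mul_of_nonneg_left hp5 ha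
    have := mul_le_mul_of_nonneg_left hq5 hb
    linarith

lemma memT3_comb {a b : ℝ} (ha : 0 ≤ a) (hb : 0 ≤ b) (hab : a + b = 1)
    {p q : Tri} (hp : memT3 p) (hq : memT3 q) : memT3 (a • p + b • q) :=
  ⟨memT_comb ha hb hab hp.1 hq.1, memT_comb ha hb hab hp.2.1 hq.2.1,
    memT_comb ha hb hab hp.2.2 hq.2.2⟩

lemma memT_cc {c : ℝ} (h0 : 0 ≤ c) (h2 : c < 2 * π) : memT (c, c) :=
  ⟨h0, h2, h0, h2, le_refl _⟩

lemma memT3_cc {c : ℝ} (h0 : 0 ≤ c) (h2 : c < 2 * π) :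
    memT3 (((c, c), (c, c), (c, c)) : Tri) :=
  ⟨memT_cc h0 h2, memT_cc h0 h2, memT_cc h0 h2⟩

lemma memT3_ppp : memT3 ((((π, π), (π, π), (π, π))) : Tri) :=
  memT3_cc pi_pos.le (by linarith [pi_pos])

lemma star_isConnected {s : Set Tri} {x : Tri} (h : StarConvex ℝ x s)
    (hne : s.Nonempty) : IsConnected s := by
  have := h.contractibleSpace hne
  rw [isConnected_iff_connectedSpace]
  infer_instance

lemma starC41 : StarConvex ℝ (((π, π), (π, π), (π, π)) : Tri) C41 := by
  intro x hx a b ha hb hab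
  obtain ⟨hm, h1, h2⟩ := hx
  refine ⟨memT3_comb ha hb hab memT3_ppp hm, ?_, ?_⟩
  · have key := combo_gt_s9 ha hb hab (show -(4*π) < 3*π by linarith [pi_pos]) h1
    simp [Hf, sg, coord] at key ⊢
    norm_num [Prod.smul_def] at key ⊢
    linarith
  · rcases h2 with h | h | h | h
    · left
      have key := combo_gt_s9 ha hb hab (show (4:ℝ)*π < 6*π by linarith [pi_pos]) h
      simp only [Sf] at key ⊢
      norm_num [Prod.smul_def] at key ⊢
      linarith
    · right; left
      have key := combo_gt_s9 ha hb hab (show (2:ℝ)*π < 3*π by linarith [pi_pos]) h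
      simp [Hf, sg, coord] at key ⊢
      norm_num [Prod.smul_def] at key ⊢
      linarith
    · right; right; left
      have key := combo_gt_s9 ha hb hab (show (2:ℝ)*π < 3*π by linarith [pi_pos]) h
      simp [Hf, sg, coord] at key ⊢
      norm_num [Prod.smul_def] at key ⊢
      linarith
    · right; right; right
      have key := combo_gt_s9 ha hb hab (show (2:ℝ)*π < 3*π by linarith [pi_pos]) h
      simp [Hf, sg, coord] at key ⊢
      norm_num [Prod.smul_def] at key ⊢
      linarith

lemma starC81 : StarConvex ℝ (((π, π), (π, π), (π, π)) : Tri) C81 := by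
  intro x hx a b ha hb hab
  obtain ⟨hm, h1, h2⟩ := hx
  refine ⟨memT3_comb ha hb hab memT3_ppp hm, ?_, ?_⟩
  · have key := combo_lt_s9 ha hb hab (show (3:ℝ)*π < 10*π by linarith [pi_pos]) h1
    simp [Hf, sg, coord] at key ⊢
    norm_num [Prod.smul_def] at key ⊢
    linarith
  · rcases h2 with h | h | h | h
    · left
      have key := combo_lt_s9 ha hb hab (show (6:ℝ)*π < 8*π by linarith [pi_pos]) h
      simp only [Sf] at key ⊢
      norm_num [Prod.smul_def] at key ⊢
      linarith
    · right; left
      have key := combo_lt_s9 ha hb hab (show (3:ℝ)*π < 4*π by linarith [pi_pos]) h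
      simp [Hf, sg, coord] at key ⊢
      norm_num [Prod.smul_def] at key ⊢
      linarith
    · right; right; left
      have key := combo_lt_s9 ha hb hab (show (3:ℝ)*π < 4*π by linarith [pi_pos]) h
      simp [Hf, sg, coord] at key ⊢
      norm_num [Prod.smul_def] at key ⊢
      linarith
    · right; right; right
      have key := combo_lt_s9 ha hb hab (show (3:ℝ)*π < 4*π by linarith [pi_pos]) h
      simp [Hf, sg, coord] at key ⊢
      norm_num [Prod.smul_def] at key ⊢
      linarith

lemma starC6c : StarConvex ℝ (((π, π), (π, π), (π, π)) : Tri) C6c := by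
  intro x hx a b ha hb hab
  obtain ⟨hm, h2⟩ := hx
  refine ⟨memT3_comb ha hb hab memT3_ppp hm, ?_⟩
  rcases h2 with h | h
  · left
    have key := combo_gt_s9 ha hb hab (show (0:ℝ) < 3*π by linarith [pi_pos]) h
    simp [Hf, sg, coord] at key ⊢
    norm_num [Prod.smul_def] at key ⊢
    linarith
  · right
    have key := combo_lt_s9 ha hb hab (show (3:ℝ)*π < 6*π by linarith [pi_pos]) h
    simp [Hf, sg, coord] at key ⊢
    norm_num [Prod.smul_def] at key ⊢
    linarith

lemma starC42 : StarConvex ℝ (((π/2, π/2), (π/2, π/2), (π/2, π/2)) : Tri) C42 := by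
  intro x hx a b ha hb hab
  obtain ⟨hm, h1⟩ := hx
  refine ⟨memT3_comb ha hb hab (memT3_cc (by linarith [pi_pos]) (by linarith [pi_pos])) hm, ?_⟩
  have key := combo_lt_s9 ha hb hab (show (3:ℝ)*(π/2) < 2*π by linarith [pi_pos]) h1
  simp [Hf, sg, coord] at key ⊢
  norm_num [Prod.smul_def] at key ⊢
  linarith

lemma starC82 : StarConvex ℝ (((3*π/2, 3*π/2), (3*π/2, 3*π/2), (3*π/2, 3*π/2)) : Tri) C82 := by
  intro x hx a b ha hb hab
  obtain ⟨hm, h1⟩ := hx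
  refine ⟨memT3_comb ha hb hab (memT3_cc (by linarith [pi_pos]) (by linarith [pi_pos])) hm, ?_⟩
  have key := combo_gt_s9 ha hb hab (show (4:ℝ)*π < 3*(3*π/2) by linarith [pi_pos]) h1
  simp [Hf, sg, coord] at key ⊢
  norm_num [Prod.smul_def] at key ⊢
  linarith

lemma mem_C41_ppp : (((π, π), (π, π), (π, π)) : Tri) ∈ C41 := by
  refine ⟨memT3_ppp, ?_, Or.inl ?_⟩ <;>
    simp [Hf, sg, coord, Sf] <;> linarith [pi_pos]

lemma mem_C81_ppp : (((π, π), (π, π), (π, π)) : Tri) ∈ C81 := by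
  refine ⟨memT3_ppp, ?_, Or.inl ?_⟩ <;>
    simp [Hf, sg, coord, Sf] <;> linarith [pi_pos]

lemma mem_C6c_ppp : (((π, π), (π, π), (π, π)) : Tri) ∈ C6c := by
  refine ⟨memT3_ppp, Or.inl ?_⟩
  simp [Hf, sg, coord]; linarith [pi_pos]

lemma mem_C42_pt : (((π/2, π/2), (π/2, π/2), (π/2, π/2)) : Tri) ∈ C42 := by
  refine ⟨memT3_cc (by linarith [pi_pos]) (by linarith [pi_pos]), ?_⟩
  simp [Hf, sg, coord]; linarith [pi_pos]

lemma mem_C82_pt : (((3*π/2, 3*π/2), (3*π/2, 3*π/2), (3*π/2, 3*π/2)) : Tri) ∈ C82 := by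
  refine ⟨memT3_cc (by linarith [pi_pos]) (by linarith [pi_pos]), ?_⟩
  simp [Hf, sg, coord]; linarith [pi_pos]

lemma disj_C41_C42 : C41 ∩ C42 = ∅ := by
  rw [eq_empty_iff_forall_notMem]
  rintro τ ⟨⟨hm, h1, h2⟩, -, h3⟩
  obtain ⟨⟨-, -, -, -, a5⟩, ⟨-, -, -, -, b5⟩, -, -, -, -, c5⟩ := hm
  simp [Hf, sg, coord, Sf] at h1 h2 h3
  norm_num at h1 h2 h3
  rcases h2 with h | h | h | h <;> linarith

lemma disj_C81_C82 : C81 ∩ C82 = ∅ := by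
  rw [eq_empty_iff_forall_notMem]
  rintro τ ⟨⟨hm, h1, h2⟩, -, h3⟩
  obtain ⟨⟨-, -, -, -, a5⟩, ⟨-, -, -, -, b5⟩, -, -, -, -, c5⟩ := hm
  simp [Hf, sg, coord, Sf] at h1 h2 h3
  norm_num at h1 h2 h3
  rcases h2 with h | h | h | h <;> linarith

lemma disj_P4_C41 : P4 ∩ C41 = ∅ := by
  rw [eq_empty_iff_forall_notMem]
  rintro τ ⟨⟨hm, hp⟩, -, h1, h2⟩
  rcases hp with hp | ⟨p1, p2, p3, p4, p5⟩
  · exact absurd hp (not_lt.mpr h1.le)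
  · rcases h2 with h | h | h | h <;> linarith

lemma disj_P4_C42 : P4 ∩ C42 = ∅ := by
  rw [eq_empty_iff_forall_notMem]
  rintro τ ⟨⟨hm, hp⟩, -, h3⟩
  obtain ⟨⟨a1, -, a3, -, a5⟩, ⟨b1, -, b3, -, b5⟩, c1, -, c3, -, c5⟩ := hm
  rcases hp with hp | ⟨-, -, -, -, p5⟩
  · simp [Hf, sg, coord] at hp h3
    norm_num at hp h3
    linarith
  · linarith

lemma disj_P8_C81 : P8 ∩ C81 = ∅ := by
  rw [eq_empty_iff_forall_notMem]
  rintro τ ⟨⟨hm, hp⟩, -, h1, h2⟩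
  rcases hp with hp | ⟨p1, p2, p3, p4, p5⟩
  · exact absurd hp (not_lt.mpr h1.le)
  · rcases h2 with h | h | h | h <;> linarith

lemma disj_P8_C82 : P8 ∩ C82 = ∅ := by
  rw [eq_empty_iff_forall_notMem]
  rintro τ ⟨⟨hm, hp⟩, -, h3⟩
  obtain ⟨⟨a1, a2, a3, a4, a5⟩, ⟨b1, b2, b3, b4, b5⟩, c1, c2, c3, c4, c5⟩ := hm
  rcases hp with hp | ⟨-, -, -, -, p5⟩
  · simp [Hf, sg, coord] at hp h3
    norm_num at hp h3
    linarith
  · linarith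

lemma disj_P6_C6c : P6 ∩ C6c = ∅ := by
  rw [eq_empty_iff_forall_notMem]
  rintro τ ⟨⟨hm, h1, h2⟩, -, h3⟩
  rcases h3 with h | h <;> linarith

/-- Cells of the complements of the polytopes. -/
theorem cells_of_complements :
    -- (1) connectedness, and star-shapedness of C₄^{c,1} w.r.t. p₀ = ((π,π),(π,π),(π,π))
    (IsConnected C41 ∧ IsConnected C42 ∧ IsConnected C6c ∧ IsConnected C81 ∧
      IsConnected C82 ∧ StarConvex ℝ (((π, π), (π, π), (π, π)) : Tri) C41) ∧
    -- (2) disjointness of the cells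
    (C41 ∩ C42 = ∅ ∧ C81 ∩ C82 = ∅) ∧
    -- (3) P₄π, C₄^{c,1}, C₄^{c,2} pairwise disjoint and cover off the walls
    (P4 ∩ C41 = ∅ ∧ P4 ∩ C42 = ∅ ∧ C41 ∩ C42 = ∅ ∧
      ∀ τ : Tri, memT3 τ → Hf τ 1 1 1 ≠ -(4 * π) → Sf τ ≠ 4 * π →
        Hf τ 0 1 1 ≠ 2 * π → Hf τ 1 0 1 ≠ 2 * π → Hf τ 1 1 0 ≠ 2 * π →
        Hf τ 0 0 0 ≠ 2 * π → τ ∈ P4 ∪ C41 ∪ C42) ∧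
    -- (4) P₈π, C₈^{c,1}, C₈^{c,2} pairwise disjoint and cover off the walls
    (P8 ∩ C81 = ∅ ∧ P8 ∩ C82 = ∅ ∧ C81 ∩ C82 = ∅ ∧
      ∀ τ : Tri, memT3 τ → Hf τ 0 0 0 ≠ 10 * π → Sf τ ≠ 8 * π →
        Hf τ 1 0 0 ≠ 4 * π → Hf τ 0 1 0 ≠ 4 * π → Hf τ 0 0 1 ≠ 4 * π →
        Hf τ 1 1 1 ≠ 4 * π → τ ∈ P8 ∪ C81 ∪ C82) ∧
    -- (5) P₆π and C₆^c disjoint and cover off the walls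
    (P6 ∩ C6c = ∅ ∧
      ∀ τ : Tri, memT3 τ → Hf τ 1 1 1 ≠ 0 → Hf τ 0 0 0 ≠ 6 * π → τ ∈ P6 ∪ C6c) := by
  refine ⟨⟨star_isConnected starC41 ⟨_, mem_C41_ppp⟩,
      star_isConnected starC42 ⟨_, mem_C42_pt⟩,
      star_isConnected starC6c ⟨_, mem_C6c_ppp⟩,
      star_isConnected starC81 ⟨_, mem_C81_ppp⟩,
      star_isConnected starC82 ⟨_, mem_C82_pt⟩, starC41⟩,
    ⟨disj_C41_C42, disj_C81_C82⟩,
    ⟨disj_P4_C41, disj_P4_C42, disj_C41_C42, ?_⟩,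
    ⟨disj_P8_C81, disj_P8_C82, disj_C81_C82, ?_⟩,
    ⟨disj_P6_C6c, ?_⟩⟩
  · intro τ hm h111 hS h011 h101 h110 h000
    rcases h000.lt_or_gt with hlt | hgt
    · exact Or.inr ⟨hm, hlt⟩
    · rcases h111.lt_or_gt with h1lt | h1gt
      · exact Or.inl (Or.inl ⟨hm, Or.inl h1lt⟩)
      · rcases hS.lt_or_gt with hS' | hS'
        · rcases h011.lt_or_gt with h1 | h1
          · rcases h101.lt_or_gt with h2 | h2
            · rcases h110.lt_or_gt with h3 | h3
              · exact Or.inl (Or.inl ⟨hm, Or.inr ⟨hS', h1, h2, h3, hgt⟩⟩)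
              · exact Or.inl (Or.inr ⟨hm, h1gt, Or.inr (Or.inr (Or.inr h3))⟩)
            · exact Or.inl (Or.inr ⟨hm, h1gt, Or.inr (Or.inr (Or.inl h2))⟩)
          · exact Or.inl (Or.inr ⟨hm, h1gt, Or.inr (Or.inl h1)⟩)
        · exact Or.inl (Or.inr ⟨hm, h1gt, Or.inl hS'⟩)
  · intro τ hm h000 hS h100 h010 h001 h111
    rcases h000.lt_or_gt with hlt | hgt
    · rcases h111.lt_or_gt with h1lt | h1gt
      · rcases hS.lt_or_gt with hS' | hS'
        · exact Or.inl (Or.inr ⟨hm, hlt, Or.inl hS'⟩)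
        · rcases h100.lt_or_gt with h1 | h1
          · exact Or.inl (Or.inr ⟨hm, hlt, Or.inr (Or.inl h1)⟩)
          · rcases h010.lt_or_gt with h2 | h2
            · exact Or.inl (Or.inr ⟨hm, hlt, Or.inr (Or.inr (Or.inl h2))⟩)
            · rcases h001.lt_or_gt with h3 | h3
              · exact Or.inl (Or.inr ⟨hm, hlt, Or.inr (Or.inr (Or.inr h3))⟩)
              · exact Or.inl (Or.inl ⟨hm, Or.inr ⟨hS', h1, h2, h3, h1lt⟩⟩)
      · exact Or.inr ⟨hm, h1gt⟩
    · exact Or.inl (Or.inl ⟨hm, Or.inl hgt⟩)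
  · intro τ hm h111 h000
    rcases h111.lt_or_gt with hlt | hgt
    · rcases h000.lt_or_gt with h0lt | h0gt
      · exact Or.inr ⟨hm, Or.inr h0lt⟩
      · exact Or.inl ⟨hm, hlt, h0gt⟩
    · exact Or.inr ⟨hm, Or.inl hgt⟩
end
end

section
/- Existence of an explicit irreducible solution: There exist matrices A, B, C ∈ U(2,1) with det A = det B = det C = 1 such that: A is conjugate by an element of U(2,1) to diag(1, e^{iπ/3}, e^{−iπ/3}); B is conjugate by an element of U(2,1) to diag(e^{iπ/3}, 1, e^{−iπ/3}); C is conjugate by an element of U(2,1) to diag(e^{−iπ/3}, e^{−2iπ/3}, −1); A·B·C = I₃; and there is no ℂ-subspace W ⊆ ℂ³ with {0} ≠ W ≠ ℂ³ satisfying A·W ⊆ W, B·W ⊆ W and C·W ⊆ W. -/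
open Real Matrix

noncomputable section

/-- `e^{ix}` for real `x`. -/
def cexp (x : ℝ) : ℂ := Complex.exp (x * Complex.I)

/- ### Auxiliary constants and facts -/

def S : ℂ := (Real.sqrt 3 : ℝ)

lemma hS2 : S^2 = 3 := by
  rw [S, ← Complex.ofReal_pow, Real.sq_sqrt (by norm_num : (3:ℝ) ≥ 0)]; norm_num

lemma hI2 : Complex.I^2 = -1 := Complex.I_sq

lemma hSconj : (starRingEnd ℂ) S = S := Complex.conj_ofReal _

lemma conjT3 (a b c d e f g h i : ℂ) :
    (!![a,b,c;d,e,f;g,h,i])ᴴ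
      = !![star a, star d, star g; star b, star e, star h; star c, star f, star i] := by
  ext i j; fin_cases i <;> fin_cases j <;> rfl

lemma hJ3lit : J3 = !![1,0,0;0,1,0;0,0,-1] := by
  ext i j; fin_cases i <;> fin_cases j <;> rfl

lemma diag3 (a b c : ℂ) : Matrix.diagonal ![a,b,c] = !![a,0,0;0,b,0;0,0,c] := by
  ext i j; fin_cases i <;> fin_cases j <;> rfl

lemma hc1 : cexp (π/3) = (1/2) + (1/2)*S*Complex.I := by
  rw [cexp, Complex.exp_mul_I, ← Complex.ofReal_cos, ← Complex.ofReal_sin,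
      Real.cos_pi_div_three, Real.sin_pi_div_three, S]
  push_cast; ring

lemma hc2 : cexp (-(π/3)) = (1/2) + (-1/2)*S*Complex.I := by
  rw [cexp, Complex.exp_mul_I, ← Complex.ofReal_cos, ← Complex.ofReal_sin,
      Real.cos_neg, Real.sin_neg, Real.cos_pi_div_three, Real.sin_pi_div_three, S]
  push_cast; ring

lemma hc3 : cexp (-(2*π/3)) = (-1/2) + (-1/2)*S*Complex.I := by
  rw [cexp, Complex.exp_mul_I, ← Complex.ofReal_cos, ← Complex.ofReal_sin,
      Real.cos_neg, Real.sin_neg,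
      show (2*π/3 : ℝ) = π - π/3 by ring, Real.cos_pi_sub, Real.sin_pi_sub,
      Real.cos_pi_div_three, Real.sin_pi_div_three, S]
  push_cast; ring

/- ### The explicit matrices and their properties -/

def Am : M3 := !![(1), (0), (0);
    (0), (1/2) + (1/2)*S*Complex.I, (0);
    (0), (0), (1/2) + (-1/2)*S*Complex.I]

lemma Am_def : Am = !![(1), (0), (0);
    (0), (1/2) + (1/2)*S*Complex.I, (0);
    (0), (0), (1/2) + (-1/2)*S*Complex.I] := rfl

def Bm : M3 := !![(1) + (1)*S*Complex.I, (0), (-3/2) + (-1/2)*S*Complex.I;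
    (-1), (1) + (1/3)*S*Complex.I, (1) + (-1/3)*S*Complex.I;
    (-1) + (1)*S*Complex.I, (1/2) + (-1/6)*S*Complex.I, (-4/3)*S*Complex.I]

lemma Bm_def : Bm = !![(1) + (1)*S*Complex.I, (0), (-3/2) + (-1/2)*S*Complex.I;
    (-1), (1) + (1/3)*S*Complex.I, (1) + (-1/3)*S*Complex.I;
    (-1) + (1)*S*Complex.I, (1/2) + (-1/6)*S*Complex.I, (-4/3)*S*Complex.I] := rfl

def Cm : M3 := !![(1) + (-1)*S*Complex.I, (-1/2) + (1/2)*S*Complex.I, (-1) + (1)*S*Complex.I;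
    (0), (-2/3)*S*Complex.I, (-1/3)*S*Complex.I;
    (3/2) + (-1/2)*S*Complex.I, (-1) + (1/3)*S*Complex.I, (-2) + (2/3)*S*Complex.I]

lemma Cm_def : Cm = !![(1) + (-1)*S*Complex.I, (-1/2) + (1/2)*S*Complex.I, (-1) + (1)*S*Complex.I;
    (0), (-2/3)*S*Complex.I, (-1/3)*S*Complex.I;
    (3/2) + (-1/2)*S*Complex.I, (-1) + (1/3)*S*Complex.I, (-2) + (2/3)*S*Complex.I] := rfl

def Qm : M3 := !![(-1/2) + (1/2)*S*Complex.I, (1), (1);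
    (-1/2) + (1/6)*S*Complex.I, (-1), (-1/2) + (1/6)*S*Complex.I;
    (-1/2) + (1/6)*S*Complex.I, (1/2) + (1/2)*S*Complex.I, (1) + (2/3)*S*Complex.I]

lemma Qm_def : Qm = !![(-1/2) + (1/2)*S*Complex.I, (1), (1);
    (-1/2) + (1/6)*S*Complex.I, (-1), (-1/2) + (1/6)*S*Complex.I;
    (-1/2) + (1/6)*S*Complex.I, (1/2) + (1/2)*S*Complex.I, (1) + (2/3)*S*Complex.I] := rfl

def QiM : M3 := !![(-1/2) + (-1/2)*S*Complex.I, (-1/2) + (-1/6)*S*Complex.I, (1/2) + (1/6)*S*Complex.I;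
    (1), (-1), (-1/2) + (1/2)*S*Complex.I;
    (-1), (1/2) + (1/6)*S*Complex.I, (1) + (-2/3)*S*Complex.I]

lemma QiM_def : QiM = !![(-1/2) + (-1/2)*S*Complex.I, (-1/2) + (-1/6)*S*Complex.I, (1/2) + (1/6)*S*Complex.I;
    (1), (-1), (-1/2) + (1/2)*S*Complex.I;
    (-1), (1/2) + (1/6)*S*Complex.I, (1) + (-2/3)*S*Complex.I] := rfl

def Pm : M3 := !![(-1), (1/2) + (1/2)*S*Complex.I, (1/7) + (-4/7)*S*Complex.I;
    (1/3)*S*Complex.I, (-1), (3/14) + (13/42)*S*Complex.I;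
    (-1/2) + (-1/6)*S*Complex.I, (1/2) + (1/2)*S*Complex.I, (1/2) + (-5/6)*S*Complex.I]

lemma Pm_def : Pm = !![(-1), (1/2) + (1/2)*S*Complex.I, (1/7) + (-4/7)*S*Complex.I;
    (1/3)*S*Complex.I, (-1), (3/14) + (13/42)*S*Complex.I;
    (-1/2) + (-1/6)*S*Complex.I, (1/2) + (1/2)*S*Complex.I, (1/2) + (-5/6)*S*Complex.I] := rfl

def PiM : M3 := !![(-1), (-1/3)*S*Complex.I, (1/2) + (-1/6)*S*Complex.I;
    (1/2) + (-1/2)*S*Complex.I, (-1), (-1/2) + (1/2)*S*Complex.I;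
    (-1/7) + (-4/7)*S*Complex.I, (-3/14) + (13/42)*S*Complex.I, (1/2) + (5/6)*S*Complex.I]

lemma PiM_def : PiM = !![(-1), (-1/3)*S*Complex.I, (1/2) + (-1/6)*S*Complex.I;
    (1/2) + (-1/2)*S*Complex.I, (-1), (-1/2) + (1/2)*S*Complex.I;
    (-1/7) + (-4/7)*S*Complex.I, (-3/14) + (13/42)*S*Complex.I, (1/2) + (5/6)*S*Complex.I] := rfl

def D1m : M3 := !![(1), (0), (0);
    (0), (1/2) + (1/2)*S*Complex.I, (0);
    (0), (0), (1/2) + (-1/2)*S*Complex.I]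

lemma D1m_def : D1m = !![(1), (0), (0);
    (0), (1/2) + (1/2)*S*Complex.I, (0);
    (0), (0), (1/2) + (-1/2)*S*Complex.I] := rfl

def D2m : M3 := !![(1/2) + (1/2)*S*Complex.I, (0), (0);
    (0), (1), (0);
    (0), (0), (1/2) + (-1/2)*S*Complex.I]

lemma D2m_def : D2m = !![(1/2) + (1/2)*S*Complex.I, (0), (0);
    (0), (1), (0);
    (0), (0), (1/2) + (-1/2)*S*Complex.I] := rfl

def DCm : M3 := !![(1/2) + (-1/2)*S*Complex.I, (0), (0);
    (0), (-1/2) + (-1/2)*S*Complex.I, (0);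
    (0), (0), (-1)]

lemma DCm_def : DCm = !![(1/2) + (-1/2)*S*Complex.I, (0), (0);
    (0), (-1/2) + (-1/2)*S*Complex.I, (0);
    (0), (0), (-1)] := rfl

lemma hUAm : memU21 Am := by
  rw [memU21, Am_def, conjT3, hJ3lit, Matrix.mul_fin_three, Matrix.mul_fin_three]
  simp only [Complex.star_def, _root_.map_add, _root_.map_mul, map_div₀, _root_.map_neg, _root_.map_one, _root_.map_zero, map_ofNat, Complex.conj_I, hSconj]
  refine congrArg Matrix.of (Matrix.vec3_eq (Matrix.vec3_eq ?_ ?_ ?_) (Matrix.vec3_eq ?_ ?_ ?_) (Matrix.vec3_eq ?_ ?_ ?_))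
  · ring
  · ring
  · ring
  · ring
  · linear_combination ((1/4:ℂ)) * hS2 + ((-1/4:ℂ)*S^2) * hI2
  · ring
  · ring
  · ring
  · linear_combination ((-1/4:ℂ)) * hS2 + ((1/4:ℂ)*S^2) * hI2

lemma hUBm : memU21 Bm := by
  rw [memU21, Bm_def, conjT3, hJ3lit, Matrix.mul_fin_three, Matrix.mul_fin_three]
  simp only [Complex.star_def, _root_.map_add, _root_.map_mul, map_div₀, _root_.map_neg, _root_.map_one, _root_.map_zero, map_ofNat, Complex.conj_I, hSconj]
  refine congrArg Matrix.of (Matrix.vec3_eq (Matrix.vec3_eq ?_ ?_ ?_) (Matrix.vec3_eq ?_ ?_ ?_) (Matrix.vec3_eq ?_ ?_ ?_))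
  · ring
  · linear_combination ((1/6:ℂ)) * hS2 + ((-1/6:ℂ)*S^2) * hI2
  · linear_combination ((5/6:ℂ)) * hS2 + ((-5/6:ℂ)*S^2) * hI2
  · linear_combination ((1/6:ℂ)) * hS2 + ((-1/6:ℂ)*S^2) * hI2
  · linear_combination ((1/12:ℂ)) * hS2 + ((-1/12:ℂ)*S^2) * hI2
  · linear_combination ((-1/3:ℂ)) * hS2 + ((1/3:ℂ)*S^2) * hI2
  · linear_combination ((5/6:ℂ)) * hS2 + ((-5/6:ℂ)*S^2) * hI2
  · linear_combination ((-1/3:ℂ)) * hS2 + ((1/3:ℂ)*S^2) * hI2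
  · linear_combination ((-17/12:ℂ)) * hS2 + ((17/12:ℂ)*S^2) * hI2

lemma hUCm : memU21 Cm := by
  rw [memU21, Cm_def, conjT3, hJ3lit, Matrix.mul_fin_three, Matrix.mul_fin_three]
  simp only [Complex.star_def, _root_.map_add, _root_.map_mul, map_div₀, _root_.map_neg, _root_.map_one, _root_.map_zero, map_ofNat, Complex.conj_I, hSconj]
  refine congrArg Matrix.of (Matrix.vec3_eq (Matrix.vec3_eq ?_ ?_ ?_) (Matrix.vec3_eq ?_ ?_ ?_) (Matrix.vec3_eq ?_ ?_ ?_))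
  · linear_combination ((3/4:ℂ)) * hS2 + ((-3/4:ℂ)*S^2) * hI2
  · linear_combination ((-1/3:ℂ)) * hS2 + ((1/3:ℂ)*S^2) * hI2
  · linear_combination ((-2/3:ℂ)) * hS2 + ((2/3:ℂ)*S^2) * hI2
  · linear_combination ((-1/3:ℂ)) * hS2 + ((1/3:ℂ)*S^2) * hI2
  · linear_combination ((7/12:ℂ)) * hS2 + ((-7/12:ℂ)*S^2) * hI2
  · linear_combination ((1/2:ℂ)) * hS2 + ((-1/2:ℂ)*S^2) * hI2
  · linear_combination ((-2/3:ℂ)) * hS2 + ((2/3:ℂ)*S^2) * hI2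
  · linear_combination ((1/2:ℂ)) * hS2 + ((-1/2:ℂ)*S^2) * hI2
  · linear_combination ((2/3:ℂ)) * hS2 + ((-2/3:ℂ)*S^2) * hI2

lemma hUQm : memU21 Qm := by
  rw [memU21, Qm_def, conjT3, hJ3lit, Matrix.mul_fin_three, Matrix.mul_fin_three]
  simp only [Complex.star_def, _root_.map_add, _root_.map_mul, map_div₀, _root_.map_neg, _root_.map_one, _root_.map_zero, map_ofNat, Complex.conj_I, hSconj]
  refine congrArg Matrix.of (Matrix.vec3_eq (Matrix.vec3_eq ?_ ?_ ?_) (Matrix.vec3_eq ?_ ?_ ?_) (Matrix.vec3_eq ?_ ?_ ?_))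
  · linear_combination ((1/4:ℂ)) * hS2 + ((-1/4:ℂ)*S^2) * hI2
  · linear_combination ((-1/12:ℂ)) * hS2 + ((1/12:ℂ)*S^2) * hI2
  · linear_combination ((-1/12:ℂ)) * hS2 + ((1/12:ℂ)*S^2) * hI2
  · linear_combination ((-1/12:ℂ)) * hS2 + ((1/12:ℂ)*S^2) * hI2
  · linear_combination ((-1/4:ℂ)) * hS2 + ((1/4:ℂ)*S^2) * hI2
  · linear_combination ((-1/3:ℂ)) * hS2 + ((1/3:ℂ)*S^2) * hI2
  · linear_combination ((-1/12:ℂ)) * hS2 + ((1/12:ℂ)*S^2) * hI2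
  · linear_combination ((-1/3:ℂ)) * hS2 + ((1/3:ℂ)*S^2) * hI2
  · linear_combination ((-5/12:ℂ)) * hS2 + ((5/12:ℂ)*S^2) * hI2

lemma hUPm : memU21 Pm := by
  rw [memU21, Pm_def, conjT3, hJ3lit, Matrix.mul_fin_three, Matrix.mul_fin_three]
  simp only [Complex.star_def, _root_.map_add, _root_.map_mul, map_div₀, _root_.map_neg, _root_.map_one, _root_.map_zero, map_ofNat, Complex.conj_I, hSconj]
  refine congrArg Matrix.of (Matrix.vec3_eq (Matrix.vec3_eq ?_ ?_ ?_) (Matrix.vec3_eq ?_ ?_ ?_) (Matrix.vec3_eq ?_ ?_ ?_))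
  · linear_combination ((1/12:ℂ)) * hS2 + ((-1/12:ℂ)*S^2) * hI2
  · linear_combination ((1/12:ℂ)) * hS2 + ((-1/12:ℂ)*S^2) * hI2
  · linear_combination ((-1/28:ℂ)) * hS2 + ((1/28:ℂ)*S^2) * hI2
  · linear_combination ((1/12:ℂ)) * hS2 + ((-1/12:ℂ)*S^2) * hI2
  · ring
  · linear_combination ((11/84:ℂ)) * hS2 + ((-11/84:ℂ)*S^2) * hI2
  · linear_combination ((-1/28:ℂ)) * hS2 + ((1/28:ℂ)*S^2) * hI2
  · linear_combination ((11/84:ℂ)) * hS2 + ((-11/84:ℂ)*S^2) * hI2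
  · linear_combination ((-40/147:ℂ)) * hS2 + ((40/147:ℂ)*S^2) * hI2

lemma hdetAm : Am.det = 1 := by
  rw [Am_def, Matrix.det_fin_three]
  simp only [Matrix.cons_val', Matrix.cons_val_zero, Matrix.cons_val_one, Matrix.cons_val_two,
    Matrix.head_cons, Matrix.tail_cons, Matrix.head_fin_const, Matrix.empty_val',
    Matrix.cons_val_fin_one, Matrix.of_apply]
  linear_combination ((1/4:ℂ)) * hS2 + ((-1/4:ℂ)*S^2) * hI2

lemma hdetBm : Bm.det = 1 := by
  rw [Bm_def, Matrix.det_fin_three]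
  simp only [Matrix.cons_val', Matrix.cons_val_zero, Matrix.cons_val_one, Matrix.cons_val_two,
    Matrix.head_cons, Matrix.tail_cons, Matrix.head_fin_const, Matrix.empty_val',
    Matrix.cons_val_fin_one, Matrix.of_apply]
  linear_combination ((3/4:ℂ) + (1/3:ℂ)*S*Complex.I) * hS2 + ((-3/4:ℂ)*S^2 + (-1/3:ℂ)*S^3*Complex.I) * hI2

lemma hdetCm : Cm.det = 1 := by
  rw [Cm_def, Matrix.det_fin_three]
  simp only [Matrix.cons_val', Matrix.cons_val_zero, Matrix.cons_val_one, Matrix.cons_val_two,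
    Matrix.head_cons, Matrix.tail_cons, Matrix.head_fin_const, Matrix.empty_val',
    Matrix.cons_val_fin_one, Matrix.of_apply]
  linear_combination ((1/3:ℂ) + (-1/12:ℂ)*S*Complex.I) * hS2 + ((-1/3:ℂ)*S^2 + (1/12:ℂ)*S^3*Complex.I) * hI2

lemma hQQi : Qm * QiM = 1 := by
  rw [Qm_def, QiM_def, Matrix.mul_fin_three, Matrix.one_fin_three]
  refine congrArg Matrix.of (Matrix.vec3_eq (Matrix.vec3_eq ?_ ?_ ?_) (Matrix.vec3_eq ?_ ?_ ?_) (Matrix.vec3_eq ?_ ?_ ?_))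
  · linear_combination ((1/4:ℂ)) * hS2 + ((-1/4:ℂ)*S^2) * hI2
  · linear_combination ((1/12:ℂ)) * hS2 + ((-1/12:ℂ)*S^2) * hI2
  · linear_combination ((-1/12:ℂ)) * hS2 + ((1/12:ℂ)*S^2) * hI2
  · linear_combination ((1/12:ℂ)) * hS2 + ((-1/12:ℂ)*S^2) * hI2
  · ring
  · linear_combination ((1/12:ℂ)) * hS2 + ((-1/12:ℂ)*S^2) * hI2
  · linear_combination ((1/12:ℂ)) * hS2 + ((-1/12:ℂ)*S^2) * hI2
  · linear_combination ((-1/12:ℂ)) * hS2 + ((1/12:ℂ)*S^2) * hI2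
  · linear_combination ((1/6:ℂ)) * hS2 + ((-1/6:ℂ)*S^2) * hI2

lemma hPPi : Pm * PiM = 1 := by
  rw [Pm_def, PiM_def, Matrix.mul_fin_three, Matrix.one_fin_three]
  refine congrArg Matrix.of (Matrix.vec3_eq (Matrix.vec3_eq ?_ ?_ ?_) (Matrix.vec3_eq ?_ ?_ ?_) (Matrix.vec3_eq ?_ ?_ ?_))
  · linear_combination ((-15/196:ℂ)) * hS2 + ((15/196:ℂ)*S^2) * hI2
  · linear_combination ((26/147:ℂ)) * hS2 + ((-26/147:ℂ)*S^2) * hI2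
  · linear_combination ((19/84:ℂ)) * hS2 + ((-19/84:ℂ)*S^2) * hI2
  · linear_combination ((26/147:ℂ)) * hS2 + ((-26/147:ℂ)*S^2) * hI2
  · linear_combination ((3/196:ℂ)) * hS2 + ((-3/196:ℂ)*S^2) * hI2
  · linear_combination ((-17/84:ℂ)) * hS2 + ((17/84:ℂ)*S^2) * hI2
  · linear_combination ((-19/84:ℂ)) * hS2 + ((19/84:ℂ)*S^2) * hI2
  · linear_combination ((17/84:ℂ)) * hS2 + ((-17/84:ℂ)*S^2) * hI2
  · linear_combination ((5/12:ℂ)) * hS2 + ((-5/12:ℂ)*S^2) * hI2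

lemma hBQD : Bm = Qm * D2m * QiM := by
  rw [Bm_def, Qm_def, D2m_def, QiM_def, Matrix.mul_fin_three, Matrix.mul_fin_three]
  refine congrArg Matrix.of (Matrix.vec3_eq (Matrix.vec3_eq ?_ ?_ ?_) (Matrix.vec3_eq ?_ ?_ ?_) (Matrix.vec3_eq ?_ ?_ ?_))
  · linear_combination ((-1/8:ℂ) + (-1/8:ℂ)*S*Complex.I) * hS2 + ((1/8:ℂ)*S^2 + (1/8:ℂ)*S^3*Complex.I) * hI2
  · linear_combination ((-5/24:ℂ) + (-1/24:ℂ)*S*Complex.I) * hS2 + ((5/24:ℂ)*S^2 + (1/24:ℂ)*S^3*Complex.I) * hI2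
  · linear_combination ((11/24:ℂ) + (1/24:ℂ)*S*Complex.I) * hS2 + ((-11/24:ℂ)*S^2 + (-1/24:ℂ)*S^3*Complex.I) * hI2
  · linear_combination ((1/8:ℂ) + (-1/24:ℂ)*S*Complex.I) * hS2 + ((-1/8:ℂ)*S^2 + (1/24:ℂ)*S^3*Complex.I) * hI2
  · linear_combination ((-1/36:ℂ)*S*Complex.I) * hS2 + ((1/36:ℂ)*S^3*Complex.I) * hI2
  · linear_combination ((-7/24:ℂ) + (5/72:ℂ)*S*Complex.I) * hS2 + ((7/24:ℂ)*S^2 + (-5/72:ℂ)*S^3*Complex.I) * hI2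
  · linear_combination ((3/8:ℂ) + (-1/24:ℂ)*S*Complex.I) * hS2 + ((-3/8:ℂ)*S^2 + (1/24:ℂ)*S^3*Complex.I) * hI2
  · linear_combination ((-5/24:ℂ) + (-5/72:ℂ)*S*Complex.I) * hS2 + ((5/24:ℂ)*S^2 + (5/72:ℂ)*S^3*Complex.I) * hI2
  · linear_combination ((1/24:ℂ) + (17/72:ℂ)*S*Complex.I) * hS2 + ((-1/24:ℂ)*S^2 + (-17/72:ℂ)*S^3*Complex.I) * hI2

lemma hCPD : Cm = Pm * DCm * PiM := by
  rw [Cm_def, Pm_def, DCm_def, PiM_def, Matrix.mul_fin_three, Matrix.mul_fin_three]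
  refine congrArg Matrix.of (Matrix.vec3_eq (Matrix.vec3_eq ?_ ?_ ?_) (Matrix.vec3_eq ?_ ?_ ?_) (Matrix.vec3_eq ?_ ?_ ?_))
  · linear_combination ((-79/392:ℂ) + (1/8:ℂ)*S*Complex.I) * hS2 + ((79/392:ℂ)*S^2 + (-1/8:ℂ)*S^3*Complex.I) * hI2
  · linear_combination ((51/196:ℂ)) * hS2 + ((-51/196:ℂ)*S^2) * hI2
  · linear_combination ((15/56:ℂ) + (-1/8:ℂ)*S*Complex.I) * hS2 + ((-15/56:ℂ)*S^2 + (1/8:ℂ)*S^3*Complex.I) * hI2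
  · linear_combination ((55/588:ℂ)) * hS2 + ((-55/588:ℂ)*S^2) * hI2
  · linear_combination ((-89/588:ℂ) + (1/18:ℂ)*S*Complex.I) * hS2 + ((89/588:ℂ)*S^2 + (-1/18:ℂ)*S^3*Complex.I) * hI2
  · linear_combination ((-5/42:ℂ) + (1/36:ℂ)*S*Complex.I) * hS2 + ((5/42:ℂ)*S^2 + (-1/36:ℂ)*S^3*Complex.I) * hI2
  · linear_combination ((-73/168:ℂ) + (1/8:ℂ)*S*Complex.I) * hS2 + ((73/168:ℂ)*S^2 + (-1/8:ℂ)*S^3*Complex.I) * hI2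
  · linear_combination ((19/42:ℂ) + (-1/36:ℂ)*S*Complex.I) * hS2 + ((-19/42:ℂ)*S^2 + (1/36:ℂ)*S^3*Complex.I) * hI2
  · linear_combination ((7/12:ℂ) + (-5/36:ℂ)*S*Complex.I) * hS2 + ((-7/12:ℂ)*S^2 + (5/36:ℂ)*S^3*Complex.I) * hI2

lemma hABC : Am * Bm * Cm = 1 := by
  rw [Am_def, Bm_def, Cm_def, Matrix.mul_fin_three, Matrix.mul_fin_three, Matrix.one_fin_three]
  refine congrArg Matrix.of (Matrix.vec3_eq (Matrix.vec3_eq ?_ ?_ ?_) (Matrix.vec3_eq ?_ ?_ ?_) (Matrix.vec3_eq ?_ ?_ ?_))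
  · linear_combination ((3/4:ℂ)) * hS2 + ((-3/4:ℂ)*S^2) * hI2
  · linear_combination ((-1/3:ℂ)) * hS2 + ((1/3:ℂ)*S^2) * hI2
  · linear_combination ((-2/3:ℂ)) * hS2 + ((2/3:ℂ)*S^2) * hI2
  · linear_combination ((-1/12:ℂ) + (-1/12:ℂ)*S*Complex.I) * hS2 + ((1/12:ℂ)*S^2 + (1/12:ℂ)*S^3*Complex.I) * hI2
  · linear_combination ((5/12:ℂ) + (1/6:ℂ)*S*Complex.I) * hS2 + ((-5/12:ℂ)*S^2 + (-1/6:ℂ)*S^3*Complex.I) * hI2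
  · linear_combination ((1/6:ℂ) + (1/6:ℂ)*S*Complex.I) * hS2 + ((-1/6:ℂ)*S^2 + (-1/6:ℂ)*S^3*Complex.I) * hI2
  · linear_combination ((1/6:ℂ) + (-1/6:ℂ)*S*Complex.I) * hS2 + ((-1/6:ℂ)*S^2 + (1/6:ℂ)*S^3*Complex.I) * hI2
  · linear_combination ((-1/12:ℂ) + (1/12:ℂ)*S*Complex.I) * hS2 + ((1/12:ℂ)*S^2 + (-1/12:ℂ)*S^3*Complex.I) * hI2
  · linear_combination ((1/6:ℂ) + (1/12:ℂ)*S*Complex.I) * hS2 + ((-1/6:ℂ)*S^2 + (-1/12:ℂ)*S^3*Complex.I) * hI2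


/- ### Irreducibility -/

lemma AmV (v : Fin 3 → ℂ) :
    Am.mulVec v = ![v 0, ((1/2) + (1/2)*S*Complex.I) * v 1, ((1/2) + (-1/2)*S*Complex.I) * v 2] := by
  funext j
  fin_cases j <;>
    simp [Am_def, Matrix.mulVec, dotProduct, Fin.sum_univ_three]

lemma BmV (v : Fin 3 → ℂ) :
    Bm.mulVec v = ![((1) + (1)*S*Complex.I) * v 0 + ((-3/2) + (-1/2)*S*Complex.I) * v 2,
      (-1) * v 0 + ((1) + (1/3)*S*Complex.I) * v 1 + ((1) + (-1/3)*S*Complex.I) * v 2,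
      ((-1) + (1)*S*Complex.I) * v 0 + ((1/2) + (-1/6)*S*Complex.I) * v 1 + ((-4/3)*S*Complex.I) * v 2] := by
  funext j
  fin_cases j <;>
    simp [Bm_def, Matrix.mulVec, dotProduct, Fin.sum_univ_three] <;> ring

lemma CmV (v : Fin 3 → ℂ) :
    Cm.mulVec v = ![((1) + (-1)*S*Complex.I) * v 0 + ((-1/2) + (1/2)*S*Complex.I) * v 1 + ((-1) + (1)*S*Complex.I) * v 2,
      ((-2/3)*S*Complex.I) * v 1 + ((-1/3)*S*Complex.I) * v 2,
      ((3/2) + (-1/2)*S*Complex.I) * v 0 + ((-1) + (1/3)*S*Complex.I) * v 1 + ((-2) + (2/3)*S*Complex.I) * v 2] := by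
  funext j
  fin_cases j <;>
    simp [Cm_def, Matrix.mulVec, dotProduct, Fin.sum_univ_three] <;> ring

lemma extract0 (W : Submodule ℂ (Fin 3 → ℂ)) (hA : ∀ w ∈ W, Am.mulVec w ∈ W)
    (v : Fin 3 → ℂ) (hv : v ∈ W) (h0 : v 0 ≠ 0) : (Pi.single 0 1 : Fin 3 → ℂ) ∈ W := by
  have h1 := hA v hv
  have h2 := hA _ h1
  have hu : Am.mulVec (Am.mulVec v) + ((-1:ℂ)) • Am.mulVec v + ((1:ℂ)) • v
      = ((1:ℂ) * v 0) • (Pi.single 0 1 : Fin 3 → ℂ) := by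
    funext j
    fin_cases j <;> simp [AmV, Pi.single_apply] <;>
      first
        | ring1
        | linear_combination (v 1 * ((-1/4:ℂ))) * hS2 + (v 1 * ((1/4:ℂ)*S^2)) * hI2
        | linear_combination (v 2 * ((-1/4:ℂ))) * hS2 + (v 2 * ((1/4:ℂ)*S^2)) * hI2
  have hmem : ((1:ℂ) * v 0) • (Pi.single 0 1 : Fin 3 → ℂ) ∈ W := by
    rw [← hu]
    exact W.add_mem (W.add_mem h2 (W.smul_mem _ h1)) (W.smul_mem _ hv)
  have hne : (1:ℂ) * v 0 ≠ 0 := by simpa using h0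
  have hfin := W.smul_mem ((1:ℂ) * v 0)⁻¹ hmem
  rwa [inv_smul_smul₀ hne] at hfin

lemma extract1 (W : Submodule ℂ (Fin 3 → ℂ)) (hA : ∀ w ∈ W, Am.mulVec w ∈ W)
    (v : Fin 3 → ℂ) (hv : v ∈ W) (h0 : v 1 ≠ 0) : (Pi.single 1 1 : Fin 3 → ℂ) ∈ W := by
  have h1 := hA v hv
  have h2 := hA _ h1
  have hu : Am.mulVec (Am.mulVec v) + ((-3/2:ℂ) + (1/2:ℂ)*S*Complex.I) • Am.mulVec v
        + ((1/2:ℂ) + (-1/2:ℂ)*S*Complex.I) • v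
      = (((-3/2:ℂ) + (-1/2:ℂ)*S*Complex.I) * v 1) • (Pi.single 1 1 : Fin 3 → ℂ) := by
    funext j
    fin_cases j <;> simp [AmV, Pi.single_apply] <;>
      first
        | ring1
        | linear_combination (v 1 * ((-1/2:ℂ))) * hS2 + (v 1 * ((1/2:ℂ)*S^2)) * hI2
  have hmem : (((-3/2:ℂ) + (-1/2:ℂ)*S*Complex.I) * v 1) • (Pi.single 1 1 : Fin 3 → ℂ) ∈ W := by
    rw [← hu]
    exact W.add_mem (W.add_mem h2 (W.smul_mem _ h1)) (W.smul_mem _ hv)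
  have hc : ((-3/2:ℂ) + (-1/2:ℂ)*S*Complex.I) ≠ 0 := by
    intro h
    have h2' := congrArg Complex.im h
    simp [S] at h2'
  have hne : ((-3/2:ℂ) + (-1/2:ℂ)*S*Complex.I) * v 1 ≠ 0 := mul_ne_zero hc h0
  have hfin := W.smul_mem (((-3/2:ℂ) + (-1/2:ℂ)*S*Complex.I) * v 1)⁻¹ hmem
  rwa [inv_smul_smul₀ hne] at hfin

lemma extract2 (W : Submodule ℂ (Fin 3 → ℂ)) (hA : ∀ w ∈ W, Am.mulVec w ∈ W)
    (v : Fin 3 → ℂ) (hv : v ∈ W) (h0 : v 2 ≠ 0) : (Pi.single 2 1 : Fin 3 → ℂ) ∈ W := by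
  have h1 := hA v hv
  have h2 := hA _ h1
  have hu : Am.mulVec (Am.mulVec v) + ((-3/2:ℂ) + (-1/2:ℂ)*S*Complex.I) • Am.mulVec v
        + ((1/2:ℂ) + (1/2:ℂ)*S*Complex.I) • v
      = (((-3/2:ℂ) + (1/2:ℂ)*S*Complex.I) * v 2) • (Pi.single 2 1 : Fin 3 → ℂ) := by
    funext j
    fin_cases j <;> simp [AmV, Pi.single_apply] <;>
      first
        | ring1
        | linear_combination (v 2 * ((-1/2:ℂ))) * hS2 + (v 2 * ((1/2:ℂ)*S^2)) * hI2
  have hmem : (((-3/2:ℂ) + (1/2:ℂ)*S*Complex.I) * v 2) • (Pi.single 2 1 : Fin 3 → ℂ) ∈ W := by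
    rw [← hu]
    exact W.add_mem (W.add_mem h2 (W.smul_mem _ h1)) (W.smul_mem _ hv)
  have hc : ((-3/2:ℂ) + (1/2:ℂ)*S*Complex.I) ≠ 0 := by
    intro h
    have h2' := congrArg Complex.im h
    simp [S] at h2'
  have hne : ((-3/2:ℂ) + (1/2:ℂ)*S*Complex.I) * v 2 ≠ 0 := mul_ne_zero hc h0
  have hfin := W.smul_mem (((-3/2:ℂ) + (1/2:ℂ)*S*Complex.I) * v 2)⁻¹ hmem
  rwa [inv_smul_smul₀ hne] at hfin

lemma hirr : ¬∃ W : Submodule ℂ (Fin 3 → ℂ), W ≠ ⊥ ∧ W ≠ ⊤ ∧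
    (∀ w ∈ W, Am.mulVec w ∈ W) ∧ (∀ w ∈ W, Bm.mulVec w ∈ W) ∧
    (∀ w ∈ W, Cm.mulVec w ∈ W) := by
  rintro ⟨W, hbot, htop, hA, hB, hC⟩
  have hall : ¬((Pi.single 0 1 : Fin 3 → ℂ) ∈ W ∧ (Pi.single 1 1 : Fin 3 → ℂ) ∈ W ∧
      (Pi.single 2 1 : Fin 3 → ℂ) ∈ W) := by
    rintro ⟨s0, s1, s2⟩
    apply htop
    rw [eq_top_iff]
    rintro x -
    have hx : x = x 0 • (Pi.single 0 1 : Fin 3 → ℂ) + x 1 • (Pi.single 1 1 : Fin 3 → ℂ)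
        + x 2 • (Pi.single 2 1 : Fin 3 → ℂ) := by
      funext j; fin_cases j <;> simp [Pi.single_apply]
    rw [hx]
    exact W.add_mem (W.add_mem (W.smul_mem _ s0) (W.smul_mem _ s1)) (W.smul_mem _ s2)
  have step0 : (Pi.single 0 1 : Fin 3 → ℂ) ∈ W → False := by
    intro s0
    have hcol := hB _ s0
    have t1 : (Bm.mulVec (Pi.single 0 1)) 1 ≠ 0 := by
      simp [Bm_def, Matrix.mulVec_single]
    have t2 : (Bm.mulVec (Pi.single 0 1)) 2 ≠ 0 := by
      simp [Bm_def, Matrix.mulVec_single]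
      intro h
      have h2' := congrArg Complex.im h
      simp [S] at h2'
    exact hall ⟨s0, extract1 W hA _ hcol t1, extract2 W hA _ hcol t2⟩
  have step1 : (Pi.single 1 1 : Fin 3 → ℂ) ∈ W → False := by
    intro s1
    have hcolC := hC _ s1
    have hcolB := hB _ s1
    have t0 : (Cm.mulVec (Pi.single 1 1)) 0 ≠ 0 := by
      simp [Cm_def, Matrix.mulVec_single]
      intro h
      have h2' := congrArg Complex.im h
      simp [S] at h2'
    have t2 : (Bm.mulVec (Pi.single 1 1)) 2 ≠ 0 := by
      simp [Bm_def, Matrix.mulVec_single]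
      intro h
      have h2' := congrArg Complex.im h
      simp [S] at h2'
    exact hall ⟨extract0 W hA _ hcolC t0, s1, extract2 W hA _ hcolB t2⟩
  have step2 : (Pi.single 2 1 : Fin 3 → ℂ) ∈ W → False := by
    intro s2
    have hcol := hB _ s2
    have t0 : (Bm.mulVec (Pi.single 2 1)) 0 ≠ 0 := by
      simp [Bm_def, Matrix.mulVec_single]
      intro h
      have h2' := congrArg Complex.im h
      simp [S] at h2'
    have t1 : (Bm.mulVec (Pi.single 2 1)) 1 ≠ 0 := by
      simp [Bm_def, Matrix.mulVec_single]
      intro h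
      have h2' := congrArg Complex.im h
      simp [S] at h2'
    exact hall ⟨extract0 W hA _ hcol t0, extract1 W hA _ hcol t1, s2⟩
  obtain ⟨v, hvW, hvne⟩ := (Submodule.ne_bot_iff W).mp hbot
  have hex : ∃ i, v i ≠ 0 := by
    by_contra h
    push_neg at h
    exact hvne (funext fun i => h i)
  obtain ⟨i, hi⟩ := hex
  fin_cases i
  · exact step0 (extract0 W hA v hvW hi)
  · exact step1 (extract1 W hA v hvW hi)
  · exact step2 (extract2 W hA v hvW hi)

/- ### Main theorem -/

/-- Existence of an explicit irreducible solution to the Horn problem for the given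
triple of elliptic conjugacy classes. -/
theorem explicit_irreducible_solution :
    ∃ A B C : M3, memU21 A ∧ memU21 B ∧ memU21 C ∧
      A.det = 1 ∧ B.det = 1 ∧ C.det = 1 ∧
      (∃ P : M3, memU21 P ∧
        A = P * Matrix.diagonal ![1, cexp (π / 3), cexp (-(π / 3))] * P⁻¹) ∧
      (∃ P : M3, memU21 P ∧
        B = P * Matrix.diagonal ![cexp (π / 3), 1, cexp (-(π / 3))] * P⁻¹) ∧
      (∃ P : M3, memU21 P ∧
        C = P * Matrix.diagonal ![cexp (-(π / 3)), cexp (-(2 * π / 3)), -1] * P⁻¹) ∧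
      A * B * C = 1 ∧
      ¬∃ W : Submodule ℂ (Fin 3 → ℂ), W ≠ ⊥ ∧ W ≠ ⊤ ∧
        (∀ w ∈ W, A.mulVec w ∈ W) ∧ (∀ w ∈ W, B.mulVec w ∈ W) ∧
        (∀ w ∈ W, C.mulVec w ∈ W) := by
  have hU1 : memU21 1 := by
    rw [memU21]
    simp
  refine ⟨Am, Bm, Cm, hUAm, hUBm, hUCm, hdetAm, hdetBm, hdetCm,
    ⟨1, hU1, ?_⟩, ⟨Qm, hUQm, ?_⟩, ⟨Pm, hUPm, ?_⟩, hABC, hirr⟩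
  · rw [inv_one, mul_one, one_mul, hc1, hc2, diag3]
    exact Am_def
  · rw [hc1, hc2, diag3, Matrix.inv_eq_right_inv hQQi]
    exact hBQD
  · rw [hc2, hc3, diag3, Matrix.inv_eq_right_inv hPPi]
    exact hCPD
end
end
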